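/- arXiv:2504.06648 — 7 statements merged into one kernel-verified Lean document; each statement's English description precedes it below -/
import Mathlib

section
/- For ν ∈ ℕ^n, N > 0, and p ∈ [2,∞), the L^p norm of e_ν satisfies ‖e_ν‖_{L^p(ℂ^n)} = (2/p)^{|ν|/2 + n/p} ∏_{j=1}^n E(p ν_j)^{1/p} / E(2 ν_j)^{1/2}, where E(a) = π Γ(a/2+1) / N^{a/2+1}. -/
set_option maxHeartbeats 1000000


open MeasureTheory Finset

/-- The Bargmann basis function `e_ν` on `ℂ^n`. -/
noncomputable def bargE (n : ℕ) (N : ℝ) (ν : Fin n → ℕ) (z : Fin n → ℂ) : ℂ :=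
  ((N ^ (((n : ℝ) + ∑ j, (ν j : ℝ)) / 2) *
      Real.exp (-(N * ∑ j, ‖z j‖ ^ 2) / 2) /
      (Real.pi ^ ((n : ℝ) / 2) * Real.sqrt (∏ j, (Nat.factorial (ν j) : ℝ))) : ℝ)) *
    ∏ j, z j ^ ν j

/-- `E(a) = π Γ(a/2+1) / N^(a/2+1)`. -/
noncomputable def Eint (N a : ℝ) : ℝ :=
  Real.pi * Real.Gamma (a / 2 + 1) / N ^ (a / 2 + 1)

lemma rpow_sum_aux {x : ℝ} (hx : 0 < x) {ι : Type*} (s : Finset ι) (f : ι → ℝ) :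
    x ^ (∑ i ∈ s, f i) = ∏ i ∈ s, x ^ f i := by
  induction s using Finset.cons_induction with
  | empty => simp
  | cons a s ha ih => rw [Finset.sum_cons, Finset.prod_cons, Real.rpow_add hx, ih]

lemma Eint_pos {c a : ℝ} (hc : 0 < c) (ha : 0 ≤ a) : 0 < Eint c a := by
  have hΓ : 0 < Real.Gamma (a / 2 + 1) := Real.Gamma_pos_of_pos (by linarith)
  have : (0:ℝ) < c ^ (a / 2 + 1) := Real.rpow_pos_of_pos hc _
  exact div_pos (mul_pos Real.pi_pos hΓ) this

lemma complex_int {c a : ℝ} (hc : 0 < c) (ha : 0 ≤ a) :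
    ∫ w : ℂ, ‖w‖ ^ a * Real.exp (-(c * ‖w‖ ^ 2)) = Eint c a := by
  have h := Complex.integral_rpow_mul_exp_neg_mul_rpow (p := 2) (q := a) (b := c)
    one_le_two (by linarith) hc
  have heq : ∀ w : ℂ, ‖w‖ ^ a * Real.exp (-(c * ‖w‖ ^ 2))
      = ‖w‖ ^ a * Real.exp (-c * ‖w‖ ^ (2:ℝ)) := by
    intro w
    rw [Real.rpow_two]
    ring_nf
  rw [show (∫ w : ℂ, ‖w‖ ^ a * Real.exp (-(c * ‖w‖ ^ 2)))
      = ∫ w : ℂ, ‖w‖ ^ a * Real.exp (-c * ‖w‖ ^ (2:ℝ)) from by simp_rw [heq], h, Eint]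
  rw [show -(a + 2) / 2 = -(a / 2 + 1) by ring, Real.rpow_neg hc.le,
    show (a + 2) / 2 = a / 2 + 1 by ring]
  field_simp

theorem stmt_3 (n : ℕ) (N : ℝ) (hN : 0 < N) (ν : Fin n → ℕ) (p : ℝ) (hp : 2 ≤ p) :
    (∫ z : Fin n → ℂ, ‖bargE n N ν z‖ ^ p) ^ (1 / p) =
      (2 / p) ^ ((∑ j, (ν j : ℝ)) / 2 + n / p) *
        ∏ j, Eint N (p * ν j) ^ (1 / p) / Eint N (2 * ν j) ^ ((1 : ℝ) / 2) := by
  have hppos : (0:ℝ) < p := by linarith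
  have hπ := Real.pi_pos
  set S : ℝ := ∑ j, (ν j : ℝ) with hS
  have hSnn : 0 ≤ S := Finset.sum_nonneg fun j _ => by positivity
  set A : ℝ := N ^ (((n : ℝ) + S) / 2) with hA
  set F : ℝ := ∏ j, (Nat.factorial (ν j) : ℝ) with hF
  have hFpos : 0 < F := Finset.prod_pos fun j _ => by positivity
  set D : ℝ := Real.pi ^ ((n : ℝ) / 2) * Real.sqrt F with hD
  have hApos : 0 < A := Real.rpow_pos_of_pos hN _
  have hDpos : 0 < D := mul_pos (Real.rpow_pos_of_pos hπ _) (Real.sqrt_pos.mpr hFpos)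
  have hcpos : (0:ℝ) < p * N / 2 := by positivity
  -- pointwise identity
  have key : ∀ z : Fin n → ℂ, ‖bargE n N ν z‖ ^ p
      = (A / D) ^ p *
        ∏ j, (‖z j‖ ^ (p * (ν j : ℝ)) *
          Real.exp (-(p * N / 2 * ‖z j‖ ^ 2))) := by
    intro z
    have habs : ‖bargE n N ν z‖
        = (A / D * Real.exp (-(N * ∑ j, ‖z j‖ ^ 2) / 2)) *
          ∏ j, ‖z j‖ ^ ν j := by
      rw [bargE, norm_mul, Complex.norm_real, Real.norm_eq_abs, norm_prod]
      simp_rw [norm_pow]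
      congr 1
      rw [abs_of_nonneg (by positivity)]
      ring
    rw [habs, Real.mul_rpow (by positivity) (by positivity),
      Real.mul_rpow (by positivity) (Real.exp_nonneg _),
      ← Real.exp_mul, ← Real.finset_prod_rpow _ _ (fun j _ => by positivity) p]
    rw [show (-(N * ∑ j, ‖z j‖ ^ 2) / 2) * p
        = -(p * N / 2) * ∑ j, ‖z j‖ ^ 2 from by ring, Finset.mul_sum]
    simp only [neg_mul]
    rw [Real.exp_sum, mul_assoc, ← Finset.prod_mul_distrib]
    congr 1
    refine Finset.prod_congr rfl fun j _ => ?_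
    rw [← Real.rpow_natCast (‖z j‖) (ν j),
      ← Real.rpow_mul (norm_nonneg _), mul_comm (ν j : ℝ) p]
    exact mul_comm _ _
  simp_rw [key]
  rw [integral_const_mul,
    integral_fintype_prod_volume_eq_prod (𝕜 := ℝ) (f := fun j (w : ℂ) =>
      ‖w‖ ^ (p * (ν j : ℝ)) * Real.exp (-(p * N / 2 * ‖w‖ ^ 2)))]
  have hint : ∀ j, (∫ w : ℂ, ‖w‖ ^ (p * (ν j : ℝ)) *
      Real.exp (-(p * N / 2 * ‖w‖ ^ 2))) = Eint (p * N / 2) (p * ν j) :=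
    fun j => complex_int hcpos (by positivity)
  simp_rw [hint]
  -- now pure algebra with rpow
  have hEc : ∀ j : Fin n, 0 < Eint (p * N / 2) (p * ν j) :=
    fun j => Eint_pos hcpos (by positivity)
  have hEN : ∀ j : Fin n, 0 < Eint N (p * ν j) := fun j => Eint_pos hN (by positivity)
  have hE2 : ∀ j : Fin n, 0 < Eint N (2 * ν j) := fun j => Eint_pos hN (by positivity)
  have hfac : ∀ j : Fin n, (Eint (p * N / 2) (p * (ν j : ℝ))) ^ (1 / p)
      = (2 / p) ^ ((ν j : ℝ) / 2 + 1 / p) * (Eint N (p * ν j)) ^ (1 / p) := by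
    intro j
    have h1 : Eint (p * N / 2) (p * ν j)
        = (2 / p) ^ (p * (ν j : ℝ) / 2 + 1) * Eint N (p * ν j) := by
      unfold Eint
      rw [show (p * N / 2 : ℝ) = (p / 2) * N by ring,
        Real.mul_rpow (by positivity) hN.le,
        show (2 / p : ℝ) = (p / 2)⁻¹ by rw [inv_div],
        Real.inv_rpow (by positivity)]
      have e1 : (0:ℝ) < (p / 2) ^ (p * (ν j : ℝ) / 2 + 1) :=
        Real.rpow_pos_of_pos (by positivity) _
      have e2 : (0:ℝ) < N ^ (p * (ν j : ℝ) / 2 + 1) := Real.rpow_pos_of_pos hN _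
      field_simp
    rw [h1, Real.mul_rpow (by positivity) (hEN j).le, ← Real.rpow_mul (by positivity),
      show (p * (ν j : ℝ) / 2 + 1) * (1 / p) = (ν j : ℝ) / 2 + 1 / p from by
        field_simp]
  rw [Real.mul_rpow (by positivity) (Finset.prod_nonneg fun j _ => (hEc j).le),
    ← Real.rpow_mul (by positivity), mul_one_div_cancel hppos.ne', Real.rpow_one,
    ← Real.finset_prod_rpow _ _ (fun j _ => (hEc j).le) _]
  simp_rw [hfac]
  rw [Finset.prod_mul_distrib, ← rpow_sum_aux (by positivity : (0:ℝ) < 2 / p)]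
  have hsum : ∑ j : Fin n, ((ν j : ℝ) / 2 + 1 / p) = S / 2 + (n : ℝ) / p := by
    rw [Finset.sum_add_distrib, Finset.sum_const, Finset.card_univ, Fintype.card_fin,
      nsmul_eq_mul, ← Finset.sum_div, ← hS]
    ring
  rw [hsum, Finset.prod_div_distrib]
  have hE2eq : ∀ j : Fin n, Eint N (2 * (ν j : ℝ))
      = Real.pi * (Nat.factorial (ν j) : ℝ) / N ^ ((ν j : ℝ) + 1) := by
    intro j
    unfold Eint
    rw [show (2 * (ν j : ℝ)) / 2 + 1 = (ν j : ℝ) + 1 by ring,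
      Real.Gamma_nat_eq_factorial]
  have hprod : ∏ j, Eint N (2 * (ν j : ℝ)) ^ ((1:ℝ) / 2) = D / A := by
    rw [Real.finset_prod_rpow _ _ (fun j _ => (hE2 j).le) _]
    have hp2 : ∏ j, Eint N (2 * (ν j : ℝ)) = Real.pi ^ n * F / N ^ (S + (n : ℝ)) := by
      simp_rw [hE2eq]
      rw [Finset.prod_div_distrib, Finset.prod_mul_distrib, Finset.prod_const,
        Finset.card_univ, Fintype.card_fin, ← rpow_sum_aux hN, hF]
      congr 1
      rw [Finset.sum_add_distrib, Finset.sum_const, Finset.card_univ, Fintype.card_fin,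
        nsmul_eq_mul, mul_one, ← hS]
    rw [hp2, Real.div_rpow (by positivity) (by positivity),
      Real.mul_rpow (by positivity) hFpos.le,
      ← Real.rpow_natCast Real.pi n, ← Real.rpow_mul Real.pi_pos.le,
      ← Real.rpow_mul hN.le, ← Real.sqrt_eq_rpow, hD, hA,
      show (n : ℝ) * (1 / 2) = (n : ℝ) / 2 by ring,
      show (S + (n : ℝ)) * (1 / 2) = ((n : ℝ) + S) / 2 by ring]
  rw [hprod, div_div_eq_mul_div]
  have hADne : D ≠ 0 := hDpos.ne'
  field_simp
end

section
/- For each fixed p ≥ 2, the function f : [0,∞) → ℝ defined by f(x) = ((x + 2/p)/(x+1))^{x/2} · (px+2)^{1/(2p)} / (2x+2)^{1/4} is log-convex, i.e., log f is convex on [0,∞). -/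
open Real Set

theorem stmt_5 (p : ℝ) (hp : 2 ≤ p) :
    ConvexOn ℝ (Set.Ici 0) (fun x : ℝ =>
      Real.log (((x + 2 / p) / (x + 1)) ^ (x / 2) * (p * x + 2) ^ (1 / (2 * p)) /
        (2 * x + 2) ^ ((1 : ℝ) / 4))) := by
  have hp0 : (0 : ℝ) < p := lt_of_lt_of_le two_pos hp
  set a : ℝ := 2 / p with ha
  have ha0 : 0 < a := by positivity
  have ha1 : a ≤ 1 := by rw [ha, div_le_one hp0]; linarith
  set C : ℝ := a / 4 * Real.log p - 1 / 4 * Real.log 2 with hC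
  set F : ℝ → ℝ := fun x => (x / 2 + a / 4) * Real.log (x + a)
      - (x / 2 + 1 / 4) * Real.log (x + 1) + C with hF
  set G : ℝ → ℝ := fun x => (1 / 2) * Real.log (x + a) + (x / 2 + a / 4) / (x + a)
      - ((1 / 2) * Real.log (x + 1) + (x / 2 + 1 / 4) / (x + 1)) with hG
  -- main convexity for F
  have hFconv : ConvexOn ℝ (Set.Ici 0) F := by
    apply convexOn_of_hasDerivWithinAt2_nonneg (convex_Ici 0) (f' := G)
      (f'' := fun x => ((1 - a) * (x ^ 2 + 2 * (1 + a) * x + 3 * a)) /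
        (4 * (x + a) ^ 2 * (x + 1) ^ 2))
    · -- continuity
      intro x hx
      have hxa : 0 < x + a := by have := (mem_Ici.1 hx); linarith
      have hx1 : 0 < x + 1 := by have := (mem_Ici.1 hx); linarith
      apply ContinuousAt.continuousWithinAt
      have l1 : ContinuousAt (fun y : ℝ => Real.log (y + a)) x :=
        ((continuous_id.add continuous_const).continuousAt).log hxa.ne'
      have l2 : ContinuousAt (fun y : ℝ => Real.log (y + 1)) x :=
        ((continuous_id.add continuous_const).continuousAt).log hx1.ne'
      exact ((((continuous_id.div_const 2).add continuous_const).continuousAt.mul l1).sub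
        (((continuous_id.div_const 2).add continuous_const).continuousAt.mul l2)).add
        continuousAt_const
    · -- first derivative
      rw [interior_Ici]
      intro x hx
      have hx0 : (0 : ℝ) < x := hx
      have hxa : 0 < x + a := by linarith
      have hx1 : 0 < x + 1 := by linarith
      apply HasDerivAt.hasDerivWithinAt
      have t1 : HasDerivAt (fun y : ℝ => (y / 2 + a / 4) * Real.log (y + a))
          ((1 / 2) * Real.log (x + a) + (x / 2 + a / 4) * (1 / (x + a))) x := by
        have h1 : HasDerivAt (fun y : ℝ => y / 2 + a / 4) (1 / 2) x :=
          ((hasDerivAt_id x).div_const 2).add_const _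
        have h2 : HasDerivAt (fun y : ℝ => Real.log (y + a)) (1 / (x + a)) x := by
          have := ((hasDerivAt_id x).add_const a).log hxa.ne'
          simpa using this
        exact h1.mul h2
      have t2 : HasDerivAt (fun y : ℝ => (y / 2 + 1 / 4) * Real.log (y + 1))
          ((1 / 2) * Real.log (x + 1) + (x / 2 + 1 / 4) * (1 / (x + 1))) x := by
        have h1 : HasDerivAt (fun y : ℝ => y / 2 + 1 / 4) (1 / 2) x :=
          ((hasDerivAt_id x).div_const 2).add_const _
        have h2 : HasDerivAt (fun y : ℝ => Real.log (y + 1)) (1 / (x + 1)) x := by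
          have := ((hasDerivAt_id x).add_const 1).log hx1.ne'
          simpa using this
        exact h1.mul h2
      have := (t1.sub t2).add_const C
      convert this using 1
      · rfl
      rw [hG]
      field_simp
    · -- second derivative
      rw [interior_Ici]
      intro x hx
      have hx0 : (0 : ℝ) < x := hx
      have hxa : 0 < x + a := by linarith
      have hx1 : 0 < x + 1 := by linarith
      apply HasDerivAt.hasDerivWithinAt
      have t1 : HasDerivAt (fun y : ℝ => (1 / 2) * Real.log (y + a))
          ((1 / 2) * (1 / (x + a))) x := by
        have h2 : HasDerivAt (fun y : ℝ => Real.log (y + a)) (1 / (x + a)) x := by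
          have := ((hasDerivAt_id x).add_const a).log hxa.ne'
          simpa using this
        exact h2.const_mul _
      have t2 : HasDerivAt (fun y : ℝ => (y / 2 + a / 4) / (y + a))
          (((1 / 2) * (x + a) - (x / 2 + a / 4) * 1) / (x + a) ^ 2) x := by
        have h1 : HasDerivAt (fun y : ℝ => y / 2 + a / 4) (1 / 2) x :=
          ((hasDerivAt_id x).div_const 2).add_const _
        have h2 : HasDerivAt (fun y : ℝ => y + a) 1 x := (hasDerivAt_id x).add_const a
        exact h1.div h2 hxa.ne'
      have t3 : HasDerivAt (fun y : ℝ => (1 / 2) * Real.log (y + 1))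
          ((1 / 2) * (1 / (x + 1))) x := by
        have h2 : HasDerivAt (fun y : ℝ => Real.log (y + 1)) (1 / (x + 1)) x := by
          have := ((hasDerivAt_id x).add_const 1).log hx1.ne'
          simpa using this
        exact h2.const_mul _
      have t4 : HasDerivAt (fun y : ℝ => (y / 2 + 1 / 4) / (y + 1))
          (((1 / 2) * (x + 1) - (x / 2 + 1 / 4) * 1) / (x + 1) ^ 2) x := by
        have h1 : HasDerivAt (fun y : ℝ => y / 2 + 1 / 4) (1 / 2) x :=
          ((hasDerivAt_id x).div_const 2).add_const _
        have h2 : HasDerivAt (fun y : ℝ => y + 1) 1 x := (hasDerivAt_id x).add_const 1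
        exact h1.div h2 hx1.ne'
      have := (t1.add t2).sub (t3.add t4)
      convert this using 1
      · rfl
      field_simp
      ring
    · -- nonnegativity
      rw [interior_Ici]
      intro x hx
      have hx0 : (0 : ℝ) < x := hx
      have hxa : 0 < x + a := by linarith
      have hx1 : 0 < x + 1 := by linarith
      apply div_nonneg
      · apply mul_nonneg (by linarith)
        nlinarith
      · positivity
  -- transfer along EqOn
  have heq : ∀ x ∈ Set.Ici (0 : ℝ),
      Real.log (((x + a) / (x + 1)) ^ (x / 2) * (p * x + 2) ^ (1 / (2 * p)) /
        (2 * x + 2) ^ ((1 : ℝ) / 4)) = F x := by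
    intro x hx
    have hx0 : (0 : ℝ) ≤ x := hx
    have hxa : 0 < x + a := by linarith
    have hx1 : 0 < x + 1 := by linarith
    have hq : 0 < (x + a) / (x + 1) := div_pos hxa hx1
    have hpx : 0 < p * x + 2 := by positivity
    have h2x : 0 < 2 * x + 2 := by linarith
    have e1 : p * x + 2 = p * (x + a) := by rw [ha]; field_simp
    have e2 : 2 * x + 2 = 2 * (x + 1) := by ring
    rw [Real.log_div (by positivity) (by positivity), Real.log_mul (by positivity) (by positivity),
      Real.log_rpow hq, Real.log_rpow hpx, Real.log_rpow h2x,
      Real.log_div hxa.ne' hx1.ne',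
      e1, Real.log_mul hp0.ne' hxa.ne', e2, Real.log_mul two_ne_zero hx1.ne', hF, hC, ha]
    field_simp [hp0.ne']
    ring
  refine ⟨hFconv.1, fun x hx y hy s t hs ht hst => ?_⟩
  dsimp only
  rw [heq x hx, heq y hy, heq _ (hFconv.1 hx hy hs ht hst)]
  exact hFconv.2 hx hy hs ht hst
end

section
/- The function g : [0,∞) → ℝ defined by g(x) = (x/(x+1))^{x/2} / (2x+2)^{1/4} is log-convex on (0,∞), i.e., log g is convex. -/
open Real Set

private lemma g_deriv1 {x : ℝ} (hx : 0 < x) :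
    HasDerivAt (fun x : ℝ => x / 2 * Real.log x - x / 2 * Real.log (x + 1)
      - 1 / 4 * Real.log (2 * x + 2))
      (Real.log x / 2 + 1 / 2 - Real.log (x + 1) / 2 - x / (2 * (x + 1))
        - 1 / (2 * (2 * x + 2))) x := by
  have hx1 : x + 1 ≠ 0 := by linarith
  have hx2 : 2 * x + 2 ≠ 0 := by linarith
  have h1 : HasDerivAt (fun x : ℝ => x / 2 * Real.log x)
      ((1 / 2) * Real.log x + x / 2 * x⁻¹) x :=
    ((hasDerivAt_id x).div_const 2).mul (Real.hasDerivAt_log hx.ne')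
  have h2 : HasDerivAt (fun x : ℝ => x / 2 * Real.log (x + 1))
      ((1 / 2) * Real.log (x + 1) + x / 2 * (1 / (x + 1))) x :=
    ((hasDerivAt_id x).div_const 2).mul (((hasDerivAt_id x).add_const 1).log hx1)
  have h3 : HasDerivAt (fun x : ℝ => 1 / 4 * Real.log (2 * x + 2))
      (1 / 4 * (2 / (2 * x + 2))) x := by
    simpa using ((((hasDerivAt_id x).const_mul 2).add_const 2).log hx2).const_mul (1/4:ℝ)
  have := (h1.sub h2).sub h3
  refine this.congr_deriv ?_
  field_simp
  ring

private lemma g_deriv2 {x : ℝ} (hx : 0 < x) :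
    HasDerivAt (fun x : ℝ => Real.log x / 2 + 1 / 2 - Real.log (x + 1) / 2 - x / (2 * (x + 1))
      - 1 / (2 * (2 * x + 2)))
      ((x + 2) / (4 * x * (x + 1) ^ 2)) x := by
  have hx1 : x + 1 ≠ 0 := by linarith
  have hx2 : 2 * x + 2 ≠ 0 := by linarith
  have hx3 : (2 : ℝ) * (x + 1) ≠ 0 := by positivity
  have hx4 : (2 : ℝ) * (2 * x + 2) ≠ 0 := by positivity
  have h1 : HasDerivAt (fun x : ℝ => Real.log x / 2 + 1 / 2) (x⁻¹ / 2) x :=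
    ((Real.hasDerivAt_log hx.ne').div_const 2).add_const (1 / 2)
  have h2 : HasDerivAt (fun x : ℝ => Real.log (x + 1) / 2) ((1 / (x + 1)) / 2) x :=
    (((hasDerivAt_id x).add_const 1).log hx1).div_const 2
  have h3 : HasDerivAt (fun x : ℝ => x / (2 * (x + 1)))
      ((1 * (2 * (x + 1)) - x * 2) / (2 * (x + 1)) ^ 2) x := by
    exact ((hasDerivAt_id x).div (((hasDerivAt_id x).add_const 1).const_mul 2) hx3).congr_deriv (by simp)
  have h4 : HasDerivAt (fun x : ℝ => 1 / (2 * (2 * x + 2)))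
      ((0 * (2 * (2 * x + 2)) - 1 * (2 * 2)) / (2 * (2 * x + 2)) ^ 2) x := by
    exact ((hasDerivAt_const x (1:ℝ)).div
      ((((hasDerivAt_id x).const_mul 2).add_const 2).const_mul 2) hx4).congr_deriv (by simp)
  have := (h1.sub h2).sub h3 |>.sub h4
  refine this.congr_deriv ?_
  field_simp
  ring

theorem stmt_6 :
    ConvexOn ℝ (Set.Ioi 0) (fun x : ℝ =>
      Real.log ((x / (x + 1)) ^ (x / 2) / (2 * x + 2) ^ ((1 : ℝ) / 4))) := by
  have hconv : ConvexOn ℝ (Set.Ioi 0) (fun x : ℝ => x / 2 * Real.log x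
      - x / 2 * Real.log (x + 1) - 1 / 4 * Real.log (2 * x + 2)) := by
    have hint : interior (Set.Ioi (0:ℝ)) = Set.Ioi 0 := interior_Ioi
    refine convexOn_of_hasDerivWithinAt2_nonneg (convex_Ioi 0)
      (f' := fun x => Real.log x / 2 + 1 / 2 - Real.log (x + 1) / 2 - x / (2 * (x + 1))
        - 1 / (2 * (2 * x + 2)))
      (f'' := fun x => (x + 2) / (4 * x * (x + 1) ^ 2)) ?_ ?_ ?_ ?_
    · intro x hx
      exact ((g_deriv1 hx).differentiableAt).continuousAt.continuousWithinAt
    · intro x hx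
      rw [hint] at hx ⊢
      exact (g_deriv1 hx).hasDerivWithinAt
    · intro x hx
      rw [hint] at hx ⊢
      exact (g_deriv2 hx).hasDerivWithinAt
    · intro x hx
      rw [hint] at hx
      have hx : (0:ℝ) < x := hx
      positivity
  refine hconv.congr fun x hx => ?_
  have hx : (0:ℝ) < x := hx
  have h1 : (0:ℝ) < x / (x + 1) := by positivity
  have h2 : (0:ℝ) < 2 * x + 2 := by linarith
  have h3 : (x / (x + 1)) ^ (x / 2) ≠ 0 := (Real.rpow_pos_of_pos h1 _).ne'
  have h4 : (2 * x + 2) ^ ((1:ℝ) / 4) ≠ 0 := (Real.rpow_pos_of_pos h2 _).ne'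
  rw [Real.log_div h3 h4, Real.log_rpow h1, Real.log_rpow h2,
    Real.log_div hx.ne' (by linarith : x + 1 ≠ 0)]
  ring
end

section
/- Let n ≥ 1, a ∈ ℕ^n, and b ∈ ℕ with |a| ≤ b. Then ∫_{[0,∞)^n} ∏_{j=1}^n r_j^{2a_j + 1} · (1 + r²)^{-(b+n+1)} dr = a!(b − |a|)! / (2^n (b+n)!), where r² = ∑_j r_j². -/
open MeasureTheory Finset Set Filter Real Topology

lemma aux_cont (S : ℝ) (hS : 0 < S) (m c : ℕ) :
    Continuous fun r : ℝ => r ^ m / (S + r ^ 2) ^ c :=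
  (continuous_pow m).div ((continuous_const.add (continuous_pow 2)).pow c)
    (fun r => pow_ne_zero _ (by positivity))

lemma aux_bound (S : ℝ) (hS : 0 < S) (m c : ℕ) (x : ℝ) (hx : 1 ≤ x) :
    x ^ m / (S + x ^ 2) ^ c ≤ x ^ ((m : ℝ) - 2 * c) := by
  have hx0 : (0:ℝ) < x := lt_of_lt_of_le one_pos hx
  have h1 : x ^ ((m : ℝ) - 2 * c) = x ^ m / x ^ (2 * c) := by
    rw [Real.rpow_sub hx0, Real.rpow_natCast]
    congr 1
    rw [show ((2:ℝ) * c) = ((2 * c : ℕ) : ℝ) by push_cast; ring, Real.rpow_natCast]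
  rw [h1]
  apply div_le_div_of_nonneg_left (by positivity) (by positivity)
  rw [pow_mul]
  exact pow_le_pow_left₀ (sq_nonneg x) (le_add_of_nonneg_left hS.le) c

lemma aux_integrable (S : ℝ) (hS : 0 < S) (m c : ℕ) (h : m + 2 ≤ 2 * c) :
    IntegrableOn (fun r : ℝ => r ^ m / (S + r ^ 2) ^ c) (Set.Ioi 0) := by
  have hc := aux_cont S hS m c
  rw [show Set.Ioi (0:ℝ) = Set.Ioc 0 1 ∪ Set.Ioi 1 from (Set.Ioc_union_Ioi_eq_Ioi zero_le_one).symm]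
  apply IntegrableOn.union
  · exact (hc.integrableOn_Icc).mono_set Set.Ioc_subset_Icc_self
  · have h' : (m:ℝ) + 2 ≤ 2*c := by exact_mod_cast h
    have hg : IntegrableOn (fun x : ℝ => x ^ ((m : ℝ) - 2 * c)) (Ioi 1) :=
      integrableOn_Ioi_rpow_of_lt (by linarith) zero_lt_one
    apply hg.mono' (hc.aestronglyMeasurable.restrict)
    filter_upwards [ae_restrict_mem measurableSet_Ioi] with x hx
    rw [Real.norm_of_nonneg (div_nonneg (pow_nonneg (by linarith [hx.out]) m) (by positivity))]
    exact aux_bound S hS m c x (le_of_lt hx)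

lemma aux_tendsto (S : ℝ) (hS : 0 < S) (m c : ℕ) (h : m < 2 * c) :
    Tendsto (fun r : ℝ => r ^ m / (S + r ^ 2) ^ c) atTop (nhds 0) := by
  have h1 : Tendsto (fun x : ℝ => x ^ ((m : ℝ) - 2 * c)) atTop (nhds 0) := by
    have h' : (m:ℝ) < 2*c := by exact_mod_cast h
    rw [show ((m:ℝ) - 2 * c) = -(2 * c - m) by ring]
    exact tendsto_rpow_neg_atTop (by linarith)
  apply squeeze_zero' ?_ ?_ h1
  · filter_upwards [eventually_ge_atTop (1:ℝ)] with x hx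
    positivity
  · filter_upwards [eventually_ge_atTop (1:ℝ)] with x hx
    exact aux_bound S hS m c x hx

lemma oneDim (a k : ℕ) (S : ℝ) (hS : 0 < S) :
    ∫ r in Set.Ioi (0:ℝ), r ^ (2 * a + 1) / (S + r ^ 2) ^ (a + k + 2)
      = a.factorial * k.factorial / (2 * (a + k + 1).factorial * S ^ (k + 1)) := by
  induction a with
  | zero =>
    have hP : ∀ r : ℝ, (0:ℝ) < S + r ^ 2 := fun r => by positivity
    set F : ℝ → ℝ := fun r => -1 / (2 * (k + 1)) * ((S + r ^ 2) ^ (k + 1))⁻¹ with hF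
    have hderiv : ∀ r : ℝ, HasDerivAt F (r ^ (2 * 0 + 1) / (S + r ^ 2) ^ (0 + k + 2)) r := by
      intro r
      have h1 : HasDerivAt (fun r : ℝ => S + r ^ 2) (2 * r) r := by
        simpa using (hasDerivAt_pow 2 r).const_add S
      have h2 := (h1.pow (k + 1)).inv (pow_ne_zero _ (hP r).ne')
      have h3 := h2.const_mul (-1 / (2 * ((k:ℝ) + 1)))
      refine h3.congr_deriv ?_
      have hPne : S + r ^ 2 ≠ 0 := (hP r).ne'
      simp only [Pi.pow_apply, Nat.add_sub_cancel]
      push_cast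
      field_simp
      ring
    have htend : Tendsto F atTop (nhds 0) := by
      have := (aux_tendsto S hS 0 (k + 1) (by omega)).const_mul (-1 / (2 * ((k:ℝ) + 1)))
      simpa [hF, mul_comm, div_eq_mul_inv] using this
    rw [integral_Ioi_of_hasDerivAt_of_tendsto' (fun x _ => hderiv x)
      (aux_integrable S hS (2 * 0 + 1) (0 + k + 2) (by omega)) htend]
    simp only [hF, Nat.factorial_zero, Nat.zero_add, Nat.factorial_succ]
    push_cast
    field_simp
    ring
  | succ a ih =>
    have hP : ∀ r : ℝ, (0:ℝ) < S + r ^ 2 := fun r => by positivity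
    set M : ℕ := a + k + 2 with hM
    set G : ℝ → ℝ := fun r => -1 / (2 * M) * (r ^ (2 * a + 2) * ((S + r ^ 2) ^ M)⁻¹) with hG
    set G' : ℝ → ℝ := fun r =>
      r ^ (2 * a + 3) / (S + r ^ 2) ^ (M + 1)
        - ((a : ℝ) + 1) / M * (r ^ (2 * a + 1) / (S + r ^ 2) ^ M) with hG'
    have hderiv : ∀ r : ℝ, HasDerivAt G (G' r) r := by
      intro r
      have h1 : HasDerivAt (fun r : ℝ => S + r ^ 2) (2 * r) r := by
        simpa using (hasDerivAt_pow 2 r).const_add S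
      have h2 := (h1.pow M).inv (pow_ne_zero _ (hP r).ne')
      have h4 := ((hasDerivAt_pow (2 * a + 2) r).mul h2).const_mul (-1 / (2 * (M:ℝ)))
      refine h4.congr_deriv ?_
      have hPne : S + r ^ 2 ≠ 0 := (hP r).ne'
      have hMne : (M:ℝ) ≠ 0 := by positivity
      simp only [Pi.pow_apply, Pi.inv_apply, Pi.mul_apply, show M - 1 = a + k + 1 by omega,
        show 2 * a + 2 - 1 = 2 * a + 1 by omega]
      simp only [hG', hM]
      push_cast
      field_simp
      ring
    have htend : Tendsto G atTop (nhds 0) := by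
      have := (aux_tendsto S hS (2 * a + 2) M (by omega)).const_mul (-1 / (2 * (M:ℝ)))
      simpa [hG, div_eq_mul_inv] using this
    have hint1 : IntegrableOn (fun r : ℝ => r ^ (2 * a + 3) / (S + r ^ 2) ^ (M + 1)) (Ioi 0) :=
      aux_integrable S hS _ _ (by omega)
    have hint2 : IntegrableOn
        (fun r : ℝ => ((a : ℝ) + 1) / M * (r ^ (2 * a + 1) / (S + r ^ 2) ^ M)) (Ioi 0) :=
      (aux_integrable S hS (2 * a + 1) M (by omega)).const_mul _
    have hintG' : IntegrableOn G' (Ioi 0) := hint1.sub hint2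
    have hG'int : ∫ r in Ioi (0:ℝ), G' r = 0 - G 0 :=
      integral_Ioi_of_hasDerivAt_of_tendsto' (fun x _ => hderiv x) hintG' htend
    have hG0 : G 0 = 0 := by simp [hG]
    have key : ∫ r in Ioi (0:ℝ), r ^ (2 * a + 3) / (S + r ^ 2) ^ (M + 1)
        = ((a : ℝ) + 1) / M * (a.factorial * k.factorial / (2 * (a + k + 1).factorial * S ^ (k + 1))) := by
      have split : ∀ r : ℝ, r ^ (2 * a + 3) / (S + r ^ 2) ^ (M + 1)
          = G' r + ((a : ℝ) + 1) / M * (r ^ (2 * a + 1) / (S + r ^ 2) ^ M) := by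
        intro r; simp [hG']
      rw [setIntegral_congr_fun measurableSet_Ioi (fun r _ => split r),
        integral_add hintG' hint2, hG'int, hG0, integral_const_mul, hM, ih]
      ring
    have hidx : 2 * (a + 1) + 1 = 2 * a + 3 := by omega
    have hidx2 : (a + 1) + k + 2 = M + 1 := by omega
    rw [hidx, hidx2, key]
    have e1 : (((a+1).factorial : ℕ) : ℝ) = ((a:ℝ)+1) * a.factorial := by
      rw [Nat.factorial_succ]; push_cast; ring
    have e2 : ((((a+1)+k+1).factorial : ℕ) : ℝ) = ((a:ℝ)+(k:ℝ)+2) * (a+k+1).factorial := by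
      rw [show (a+1)+k+1 = (a+k+1)+1 from by omega, Nat.factorial_succ]; push_cast; ring
    rw [e1, e2]
    have eM : (M:ℝ) = (a:ℝ)+(k:ℝ)+2 := by rw [hM]; push_cast; ring
    rw [eM]
    have h1 : (0:ℝ) < (a + k + 1).factorial := by exact_mod_cast Nat.factorial_pos _
    have h2 : (0:ℝ) < (a:ℝ)+(k:ℝ)+2 := by positivity
    field_simp

lemma restrict_orthant (n : ℕ) :
    (volume : Measure (Fin n → ℝ)).restrict (Set.univ.pi fun _ => Set.Ici (0:ℝ)) =
      Measure.pi fun _ : Fin n => (volume : Measure ℝ).restrict (Set.Ici 0) := by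
  refine (Measure.pi_eq fun s hs => ?_).symm
  rw [Measure.restrict_apply (MeasurableSet.univ_pi hs), ← Set.pi_inter_distrib,
    volume_pi_pi]
  exact Finset.prod_congr rfl fun i _ => (Measure.restrict_apply (hs i)).symm


lemma multi : ∀ (n : ℕ) (a : Fin n → ℕ) (k : ℕ) (S : ℝ), 0 < S →
    Integrable (fun r : Fin n → ℝ =>
        (∏ j, r j ^ (2 * a j + 1)) / (S + ∑ j, r j ^ 2) ^ (∑ j, a j + n + k + 1))
      (Measure.pi fun _ => (volume : Measure ℝ).restrict (Set.Ici 0)) ∧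
    (∫ r, (∏ j, r j ^ (2 * a j + 1)) / (S + ∑ j, r j ^ 2) ^ (∑ j, a j + n + k + 1)
        ∂(Measure.pi fun _ => (volume : Measure ℝ).restrict (Set.Ici 0))
      = ((∏ j, (a j).factorial : ℕ) : ℝ) * k.factorial /
          (2 ^ n * ((∑ j, a j + n + k).factorial : ℝ) * S ^ (k + 1))) := by
  intro n
  induction n with
  | zero =>
    intro a k S hS
    have hμ : (Measure.pi fun _ : Fin 0 => (volume : Measure ℝ).restrict (Set.Ici 0)) Set.univ = 1 := by
      simp [Measure.pi_empty_univ]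
    haveI : IsFiniteMeasure (Measure.pi fun _ : Fin 0 => (volume : Measure ℝ).restrict (Set.Ici 0)) :=
      ⟨by rw [hμ]; exact ENNReal.one_lt_top⟩
    have hfun : (fun r : Fin 0 → ℝ =>
        (∏ j, r j ^ (2 * a j + 1)) / (S + ∑ j, r j ^ 2) ^ (∑ j, a j + 0 + k + 1))
        = fun _ => 1 / S ^ (k + 1) := by
      funext r
      simp
    rw [hfun]
    constructor
    · exact integrable_const _
    · rw [integral_const, measureReal_def, hμ]
      simp
      field_simp
  | succ n ih =>
    intro a k S hS
    have hD : ∀ (x : ℝ) (y : Fin n → ℝ), (0:ℝ) < S + x ^ 2 + ∑ j, y j ^ 2 := by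
      intro x y
      have h1 : (0:ℝ) ≤ x ^ 2 := sq_nonneg _
      have h2 : (0:ℝ) ≤ ∑ j, y j ^ 2 := Finset.sum_nonneg fun j _ => sq_nonneg _
      linarith
    have hsum : ∑ j, a j = a 0 + ∑ j : Fin n, a j.succ := Fin.sum_univ_succ a
    have hCe : ∑ j, a j + (n + 1) + k + 1
        = (∑ j : Fin n, a j.succ) + n + (a 0 + k + 1) + 1 := by omega
    set g : ℝ × (Fin n → ℝ) → ℝ := fun p =>
      p.1 ^ (2 * a 0 + 1) * ((∏ j, p.2 j ^ (2 * a j.succ + 1)) /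
        (S + p.1 ^ 2 + ∑ j, p.2 j ^ 2) ^ ((∑ j : Fin n, a j.succ) + n + (a 0 + k + 1) + 1))
      with hg
    have hinner := fun x : ℝ => ih (fun j => a j.succ) (a 0 + k + 1) (S + x ^ 2) (by positivity)
    have hg2 : ∀ x : ℝ, (fun y => g (x, y)) = fun y : Fin n → ℝ =>
        x ^ (2 * a 0 + 1) * ((∏ j, y j ^ (2 * a j.succ + 1)) /
          (S + x ^ 2 + ∑ j, y j ^ 2) ^ ((∑ j : Fin n, a j.succ) + n + (a 0 + k + 1) + 1)) := by
      intro x; funext y; rfl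
    -- measure-preserving reduction
    have MP := (measurePreserving_piFinSuccAbove
      (fun _ : Fin (n + 1) => (volume : Measure ℝ).restrict (Set.Ici 0)) 0).symm
    have hgf : (fun p : ℝ × (Fin n → ℝ) =>
          (fun r : Fin (n + 1) → ℝ => (∏ j, r j ^ (2 * a j + 1)) /
            (S + ∑ j, r j ^ 2) ^ (∑ j, a j + (n + 1) + k + 1))
          ((MeasurableEquiv.piFinSuccAbove (fun _ : Fin (n + 1) => ℝ) 0).symm p)) = g := by
      funext p
      simp only [MeasurableEquiv.piFinSuccAbove_symm_apply, Fin.insertNth_zero,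
        Fin.insertNthEquiv_zero, Fin.consEquiv_apply, Fin.prod_univ_succ, Fin.sum_univ_succ,
        Fin.cons_zero, Fin.cons_succ, hg]
      rw [show a 0 + ∑ i : Fin n, a i.succ + (n + 1) + k + 1
        = ∑ j : Fin n, a j.succ + n + (a 0 + k + 1) + 1 from by omega]
      ring
    have key : (∫ r, (∏ j, r j ^ (2 * a j + 1)) / (S + ∑ j, r j ^ 2) ^ (∑ j, a j + (n + 1) + k + 1)
          ∂(Measure.pi fun _ : Fin (n + 1) => (volume : Measure ℝ).restrict (Set.Ici 0)))
        = ∫ p, g p ∂(((volume : Measure ℝ).restrict (Set.Ici 0)).prod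
            (Measure.pi fun _ : Fin n => (volume : Measure ℝ).restrict (Set.Ici 0))) := by
      rw [← MP.integral_comp']
      exact integral_congr_ae (Filter.EventuallyEq.of_eq hgf)
    -- continuity / measurability of g
    have hgc : Continuous g := by
      rw [hg]
      apply Continuous.mul ((continuous_fst.pow _))
      apply Continuous.div
      · exact continuous_finset_prod _ fun j _ => ((continuous_apply j).comp continuous_snd).pow _
      · exact ((continuous_const.add (continuous_fst.pow 2)).add
          (continuous_finset_sum _ fun j _ => ((continuous_apply j).comp continuous_snd).pow 2)).pow _
      · exact fun p => pow_ne_zero _ (hD p.1 p.2).ne'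
    have haeX : ∀ᵐ x ∂(volume : Measure ℝ).restrict (Set.Ici 0), x ∈ Set.Ici (0:ℝ) :=
      ae_restrict_mem measurableSet_Ici
    have haeY : ∀ᵐ y ∂(Measure.pi fun _ : Fin n => (volume : Measure ℝ).restrict (Set.Ici 0)),
        y ∈ Set.univ.pi fun _ : Fin n => Set.Ici (0:ℝ) := by
      rw [← restrict_orthant n]
      exact ae_restrict_mem (MeasurableSet.univ_pi fun _ => measurableSet_Ici)
    have hgnn : ∀ x : ℝ, 0 ≤ x → ∀ y : Fin n → ℝ,
        y ∈ Set.univ.pi (fun _ : Fin n => Set.Ici (0:ℝ)) → 0 ≤ g (x, y) := by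
      intro x hx y hy
      rw [hg]
      apply mul_nonneg (pow_nonneg hx _)
      apply div_nonneg _ (pow_nonneg (hD x y).le _)
      exact Finset.prod_nonneg fun j _ => pow_nonneg (hy j (Set.mem_univ j)) _
    have hInnerInt : ∀ x : ℝ, Integrable (fun y => g (x, y))
        (Measure.pi fun _ : Fin n => (volume : Measure ℝ).restrict (Set.Ici 0)) := by
      intro x
      rw [hg2 x]
      exact ((hinner x).1).const_mul _
    have hInnerVal : ∀ x : ℝ,
        (∫ y, g (x, y) ∂(Measure.pi fun _ : Fin n => (volume : Measure ℝ).restrict (Set.Ici 0)))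
          = (((∏ j : Fin n, (a j.succ).factorial : ℕ) : ℝ) * (a 0 + k + 1).factorial /
              (2 ^ n * ((∑ j : Fin n, a j.succ + n + (a 0 + k + 1)).factorial : ℝ)))
            * (x ^ (2 * a 0 + 1) / (S + x ^ 2) ^ (a 0 + k + 2)) := by
      intro x
      rw [hg2 x, integral_const_mul, (hinner x).2]
      rw [show a 0 + k + 1 + 1 = a 0 + k + 2 from rfl]
      have hb1 : ((∑ j : Fin n, a j.succ + n + (a 0 + k + 1)).factorial : ℝ) ≠ 0 := by
        exact_mod_cast (Nat.factorial_pos _).ne'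
      have hb2 : ((2:ℝ)) ^ n ≠ 0 := by positivity
      have hb3 : (S + x ^ 2) ^ (a 0 + k + 2) ≠ 0 := by positivity
      field_simp
    have hOuterInt : Integrable (fun x : ℝ =>
        (((∏ j : Fin n, (a j.succ).factorial : ℕ) : ℝ) * (a 0 + k + 1).factorial /
            (2 ^ n * ((∑ j : Fin n, a j.succ + n + (a 0 + k + 1)).factorial : ℝ)))
          * (x ^ (2 * a 0 + 1) / (S + x ^ 2) ^ (a 0 + k + 2)))
        ((volume : Measure ℝ).restrict (Set.Ici 0)) := by
      rw [← MeasureTheory.restrict_Ioi_eq_restrict_Ici]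
      exact (aux_integrable S hS (2 * a 0 + 1) (a 0 + k + 2) (by omega)).const_mul _
    have hgint : Integrable g (((volume : Measure ℝ).restrict (Set.Ici 0)).prod
        (Measure.pi fun _ : Fin n => (volume : Measure ℝ).restrict (Set.Ici 0))) := by
      rw [integrable_prod_iff hgc.aestronglyMeasurable]
      refine ⟨Filter.Eventually.of_forall fun x => hInnerInt x, ?_⟩
      apply hOuterInt.congr
      filter_upwards [haeX] with x hx
      have hnorm : (∫ y, ‖g (x, y)‖
          ∂(Measure.pi fun _ : Fin n => (volume : Measure ℝ).restrict (Set.Ici 0)))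
          = ∫ y, g (x, y) ∂(Measure.pi fun _ : Fin n => (volume : Measure ℝ).restrict (Set.Ici 0)) := by
        refine integral_congr_ae ?_
        filter_upwards [haeY] with y hy
        exact Real.norm_of_nonneg (hgnn x hx y hy)
      rw [hnorm, hInnerVal x]
    constructor
    · exact (MP.integrable_comp_emb
        (MeasurableEquiv.measurableEmbedding _)).mp (by rw [← hgf] at hgint; exact hgint)
    · rw [key, integral_prod g hgint]
      have : (fun x : ℝ => ∫ y, g (x, y)
          ∂(Measure.pi fun _ : Fin n => (volume : Measure ℝ).restrict (Set.Ici 0)))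
          = fun x : ℝ =>
            (((∏ j : Fin n, (a j.succ).factorial : ℕ) : ℝ) * (a 0 + k + 1).factorial /
                (2 ^ n * ((∑ j : Fin n, a j.succ + n + (a 0 + k + 1)).factorial : ℝ)))
              * (x ^ (2 * a 0 + 1) / (S + x ^ 2) ^ (a 0 + k + 2)) := funext fun x => hInnerVal x
      rw [this, integral_const_mul, ← MeasureTheory.restrict_Ioi_eq_restrict_Ici,
        oneDim (a 0) k S hS]
      have e1 : ((∏ j : Fin (n+1), (a j).factorial : ℕ) : ℝ)
          = ((a 0).factorial : ℝ) * ((∏ j : Fin n, (a j.succ).factorial : ℕ) : ℝ) := by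
        rw [Fin.prod_univ_succ]; push_cast; ring
      have e2 : (∑ j : Fin (n+1), a j) + (n + 1) + k = ∑ j : Fin n, a j.succ + n + (a 0 + k + 1) := by
        omega
      rw [e1, e2]
      have h1 : (0:ℝ) < ((∑ j : Fin n, a j.succ + n + (a 0 + k + 1)).factorial : ℝ) := by
        exact_mod_cast Nat.factorial_pos _
      have h2 : (0:ℝ) < ((a 0 + k + 1).factorial : ℝ) := by exact_mod_cast Nat.factorial_pos _
      have h3 : ((a 0 + k + 1).factorial : ℝ) = ((a 0 + k + 1) : ℝ) * ((a 0 + k).factorial : ℝ) := by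
        exact_mod_cast Nat.factorial_succ (a 0 + k)
      field_simp
      ring



theorem stmt_13 (n : ℕ) (hn : 1 ≤ n) (a : Fin n → ℕ) (b : ℕ) (h : ∑ j, a j ≤ b) :
    ∫ r in Set.univ.pi (fun _ : Fin n => Set.Ici (0 : ℝ)),
        (∏ j, r j ^ (2 * a j + 1)) / (1 + ∑ j, r j ^ 2) ^ (b + n + 1) =
      ((∏ j, Nat.factorial (a j) : ℕ) : ℝ) * (Nat.factorial (b - ∑ j, a j) : ℝ) /
        (2 ^ n * (Nat.factorial (b + n) : ℝ)) := by
  have H := (multi n a (b - ∑ j, a j) 1 one_pos).2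
  rw [show ∑ j, a j + n + (b - ∑ j, a j) + 1 = b + n + 1 from by omega,
    show ∑ j, a j + n + (b - ∑ j, a j) = b + n from by omega, one_pow, mul_one] at H
  rw [restrict_orthant n, H]
end

section
/- For a, b ∈ ℕ^n with |a| ≤ N, |b| ≤ N and a ≠ b, the integral ∫_{ℂ^n} w̄^a w^b (1 + |w|²)^{-(N+n+1)} dw vanishes; and for a = b it equals π^n a!(N − |a|)! / (N+n)!. -/
open MeasureTheory Finset
open Real Set Filter

lemma hdaux (c : ℝ) (hc : 0 < c) (m : ℕ) {s : ℝ} (hs : 0 ≤ s) :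
    HasDerivAt (fun t : ℝ => ((c + t) ^ m)⁻¹)
      (-(m * (c + s) ^ (m - 1)) / ((c + s) ^ m) ^ 2) s := by
  have h1 : HasDerivAt (fun t : ℝ => c + t) 1 s := (hasDerivAt_id s).const_add c
  have h2 : HasDerivAt (fun t : ℝ => (c + t) ^ m) (m * (c + s) ^ (m - 1) * 1) s := h1.pow m
  have h3 := h2.inv (by positivity)
  simp only [mul_one] at h3
  exact h3

lemma tendsto_aux (c : ℝ) (hc : 0 < c) (p : ℕ) :
    Tendsto (fun s : ℝ => ((c + s) ^ (p + 1))⁻¹) atTop (nhds 0) := by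
  apply Filter.Tendsto.inv_tendsto_atTop
  exact (tendsto_pow_atTop (Nat.succ_ne_zero p)).comp (tendsto_atTop_add_const_left _ c tendsto_id)

lemma int_base (c : ℝ) (hc : 0 < c) (p : ℕ) :
    IntegrableOn (fun s : ℝ => ((c + s) ^ (p + 2))⁻¹) (Ioi 0) ∧
    ∫ s in Ioi 0, ((c + s) ^ (p + 2))⁻¹ = ((p : ℝ) + 1)⁻¹ * (c ^ (p + 1))⁻¹ := by
  have hderiv : ∀ s ∈ Ici (0:ℝ), HasDerivAt (fun t : ℝ => -(((p:ℝ)+1))⁻¹ * ((c + t) ^ (p + 1))⁻¹)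
      (((c + s) ^ (p + 2))⁻¹) s := by
    intro s hs
    have h := (hdaux c hc (p+1) hs).const_mul (-(((p:ℝ)+1))⁻¹)
    refine h.congr_deriv ?_
    have h0 : (0:ℝ) < c + s := by simp at hs; linarith
    push_cast [Nat.add_sub_cancel]
    field_simp
    ring
  have htend : Tendsto (fun t : ℝ => -(((p:ℝ)+1))⁻¹ * ((c + t) ^ (p + 1))⁻¹) atTop (nhds 0) := by
    have := (tendsto_aux c hc p).const_mul (-(((p:ℝ)+1))⁻¹)
    simpa using this
  have hpos : ∀ s ∈ Ioi (0:ℝ), 0 ≤ ((c + s) ^ (p + 2))⁻¹ := by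
    intro s hs; simp at hs; positivity
  refine ⟨integrableOn_Ioi_deriv_of_nonneg' hderiv hpos htend, ?_⟩
  rw [integral_Ioi_of_hasDerivAt_of_nonneg' hderiv hpos htend]
  simp

lemma int_on (c : ℝ) (hc : 0 < c) (k p : ℕ) :
    IntegrableOn (fun s : ℝ => s ^ k * ((c + s) ^ (k + p + 2))⁻¹) (Ioi 0) := by
  apply Integrable.mono' (int_base c hc p).1
  · apply AEStronglyMeasurable.restrict
    exact ((measurable_id.pow_const k).mul
      (((measurable_const.add measurable_id).pow_const _).inv)).aestronglyMeasurable
  · rw [ae_restrict_iff' measurableSet_Ioi]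
    filter_upwards with s hs
    rw [Set.mem_Ioi] at hs
    have h0 : (0:ℝ) < c + s := by linarith
    rw [Real.norm_eq_abs, abs_of_nonneg (by positivity)]
    have hsk : s ^ k ≤ (c+s)^k := pow_le_pow_left₀ hs.le (by linarith) k
    calc s^k * ((c+s)^(k+p+2))⁻¹ ≤ (c+s)^k * ((c+s)^(k+p+2))⁻¹ := by gcongr
      _ = ((c+s)^(p+2))⁻¹ := by
          rw [show k+p+2 = k+(p+2) by ring, pow_add, mul_inv, ← mul_assoc,
            mul_inv_cancel₀ (by positivity), one_mul]

lemma int_val (c : ℝ) (hc : 0 < c) (p : ℕ) : ∀ k : ℕ,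
    ∫ s in Ioi 0, s ^ k * ((c + s) ^ (k + p + 2))⁻¹
      = (k.factorial * p.factorial / (k + p + 1).factorial) * (c ^ (p + 1))⁻¹ := by
  intro k
  induction k with
  | zero =>
    simp only [pow_zero, one_mul, Nat.zero_add, Nat.factorial_zero, Nat.factorial_succ]
    rw [(int_base c hc p).2]
    push_cast
    rw [mul_comm ((p:ℝ)+1)]
    field_simp
  | succ k IH =>
    have hint1 : IntegrableOn (fun s : ℝ => s ^ k * ((c + s) ^ (k + p + 2))⁻¹) (Ioi 0) :=
      int_on c hc k p
    have hint2 : IntegrableOn (fun s : ℝ => s ^ (k+1) * ((c + s) ^ (k + p + 3))⁻¹) (Ioi 0) := by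
      have := int_on c hc (k+1) p
      simpa [show k+1+p+2 = k+p+3 by omega] using this
    have hderiv : ∀ s ∈ Ici (0:ℝ), HasDerivAt (fun t : ℝ => t ^ (k+1) * ((c + t) ^ (k+p+2))⁻¹)
        (((k:ℝ)+1) * (s ^ k * ((c + s) ^ (k+p+2))⁻¹)
          - ((k:ℝ)+p+2) * (s ^ (k+1) * ((c + s) ^ (k+p+3))⁻¹)) s := by
      intro s hs
      rw [Set.mem_Ici] at hs
      have h0 : (0:ℝ) < c + s := by linarith
      have h1 := (hasDerivAt_pow (k+1) s).mul (hdaux c hc (k+p+2) hs)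
      refine h1.congr_deriv ?_
      have hm1 : k + p + 2 - 1 = k + p + 1 := rfl
      rw [hm1]
      push_cast
      field_simp
      ring
    have htend : Tendsto (fun t : ℝ => t ^ (k+1) * ((c + t) ^ (k+p+2))⁻¹) atTop (nhds 0) := by
      apply squeeze_zero' (g := fun t : ℝ => ((c + t) ^ (p + 1))⁻¹)
      · filter_upwards [Ioi_mem_atTop (0:ℝ)] with t ht
        rw [Set.mem_Ioi] at ht; positivity
      · filter_upwards [Ioi_mem_atTop (0:ℝ)] with t ht
        rw [Set.mem_Ioi] at ht
        have h0 : (0:ℝ) < c + t := by linarith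
        have hb : t ^ (k+1) ≤ (c+t)^(k+1) := pow_le_pow_left₀ ht.le (by linarith) _
        calc t^(k+1) * ((c+t)^(k+p+2))⁻¹ ≤ (c+t)^(k+1) * ((c+t)^(k+p+2))⁻¹ := by gcongr
          _ = ((c+t)^(p+1))⁻¹ := by
              rw [show k+p+2 = (k+1)+(p+1) by omega, pow_add (c+t) (k+1), mul_inv, ← mul_assoc,
                mul_inv_cancel₀ (by positivity), one_mul]
      · exact tendsto_aux c hc p
    have hint : IntegrableOn (fun s : ℝ => ((k:ℝ)+1) * (s ^ k * ((c + s) ^ (k+p+2))⁻¹)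
        - ((k:ℝ)+p+2) * (s ^ (k+1) * ((c + s) ^ (k+p+3))⁻¹)) (Ioi 0) :=
      (hint1.const_mul _).sub (hint2.const_mul _)
    have key := integral_Ioi_of_hasDerivAt_of_tendsto' hderiv hint htend
    rw [integral_sub (hint1.const_mul _) (hint2.const_mul _),
      MeasureTheory.integral_const_mul, MeasureTheory.integral_const_mul, IH] at key
    simp only [ne_eq, zero_pow, Nat.succ_ne_zero, not_false_iff, zero_mul, sub_zero,
      zero_sub, mul_zero] at key
    have hgoal : ∫ s in Ioi 0, s ^ (k+1) * ((c + s) ^ (k+1+p+2))⁻¹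
        = ∫ s in Ioi 0, s ^ (k+1) * ((c + s) ^ (k+p+3))⁻¹ := by
      norm_num [show k+1+p+2 = k+p+3 by omega]
    rw [hgoal]
    have h1 : ((k+p+1).factorial : ℝ) ≠ 0 := by
      exact_mod_cast (k+p+1).factorial_ne_zero
    have h2 : (c^(p+1):ℝ) ≠ 0 := by positivity
    have hfac : (((k+1).factorial:ℝ)) * p.factorial / ((k+1+p+1).factorial)
        = ((k:ℝ)+1) * ((k.factorial * p.factorial / (k+p+1).factorial)) / ((k:ℝ)+p+2) := by
      rw [show k+1+p+1 = (k+p+1)+1 from by omega, Nat.factorial_succ, Nat.factorial_succ]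
      push_cast
      field_simp
      ring
    rw [hfac]
    have hm : ((k:ℝ)+p+2) ≠ 0 := by positivity
    field_simp at key ⊢
    linarith [key]

lemma cint (c : ℝ) (hc : 0 < c) (k p : ℕ) :
    Integrable (fun z : ℂ => ‖z‖ ^ (2*k) * ((c + ‖z‖ ^ 2) ^ (k+p+2))⁻¹) := by
  have hcont : Continuous (fun z : ℂ => ‖z‖ ^ (2*k) * ((c + ‖z‖ ^ 2) ^ (k+p+2))⁻¹) := by
    apply Continuous.mul (continuous_norm.pow _)
    apply Continuous.inv₀ ((continuous_const.add ((continuous_norm.pow 2))).pow _)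
    intro z
    have : (0:ℝ) < ‖z‖ ^ 2 + c := by positivity
    exact pow_ne_zero _ (ne_of_gt (by simp only [Pi.add_apply, Pi.pow_apply]; linarith))
  have hbig : Integrable (fun z : ℂ => (2 * max 1 c⁻¹) ^ (p+2) * (1 + ‖z‖) ^ (-(2*(p:ℝ)+4))) := by
    apply Integrable.const_mul
    apply integrable_one_add_norm
    rw [Complex.finrank_real_complex]
    have hp : (0:ℝ) ≤ p := p.cast_nonneg
    norm_num
    linarith
  apply Integrable.mono' hbig hcont.aestronglyMeasurable
  filter_upwards with z
  set t := ‖z‖ with htd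
  have ht : 0 ≤ t := norm_nonneg z
  have hct : (0:ℝ) < c + t^2 := by positivity
  rw [Real.norm_eq_abs, abs_of_nonneg (by positivity)]
  have hr : (1 + t) ^ (-(2*(p:ℝ)+4)) = (((1+t)^(2*p+4) : ℝ))⁻¹ := by
    rw [← Real.rpow_natCast (1+t) (2*p+4), ← Real.rpow_neg (by linarith)]
    norm_num
  rw [hr]
  have hmax : 1 ≤ max 1 c⁻¹ * c := by
    rcases le_total 1 c with h | h
    · calc (1:ℝ) ≤ 1 * c := by linarith
        _ ≤ max 1 c⁻¹ * c := by gcongr; exact le_max_left _ _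
    · calc (1:ℝ) = c⁻¹ * c := by field_simp
        _ ≤ max 1 c⁻¹ * c := by gcongr; exact le_max_right _ _
  have hmax1 : (1:ℝ) ≤ max 1 c⁻¹ := le_max_left _ _
  have step1 : t^(2*k) * ((c + t^2)^(k+p+2))⁻¹ ≤ ((c+t^2)^(p+2))⁻¹ := by
    have h1 : t^(2*k) ≤ (c+t^2)^k := by
      rw [pow_mul]
      exact pow_le_pow_left₀ (by positivity) (by nlinarith) k
    calc t^(2*k) * ((c + t^2)^(k+p+2))⁻¹ ≤ (c+t^2)^k * ((c + t^2)^(k+p+2))⁻¹ := by gcongr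
      _ = ((c+t^2)^(p+2))⁻¹ := by
          rw [show k+p+2 = k+(p+2) by omega, pow_add (c+t^2) k, mul_inv, ← mul_assoc,
            mul_inv_cancel₀ (by positivity), one_mul]
  refine step1.trans ?_
  rw [show 2*p+4 = 2*(p+2) by omega, pow_mul]
  have hsq : (1+t)^2 ≤ 2 * max 1 c⁻¹ * (c + t^2) := by
    nlinarith [sq_nonneg (1-t), mul_nonneg (sub_nonneg.2 hmax1) (sq_nonneg t)]
  have h5 : ((1+t)^2)^(p+2) ≤ (2 * max 1 c⁻¹ * (c+t^2))^(p+2) :=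
    pow_le_pow_left₀ (by positivity) hsq _
  calc ((c+t^2)^(p+2))⁻¹
      = (2*max 1 c⁻¹)^(p+2) * ((2 * max 1 c⁻¹ * (c+t^2))^(p+2))⁻¹ := by
        rw [mul_pow (2 * max 1 c⁻¹) (c+t^2), mul_inv, ← mul_assoc, mul_inv_cancel₀ (by positivity), one_mul]
    _ ≤ (2*max 1 c⁻¹)^(p+2) * (((1+t)^2)^(p+2))⁻¹ := by
        exact mul_le_mul_of_nonneg_left (inv_anti₀ (by positivity) h5) (by positivity)

lemma cval (c : ℝ) (hc : 0 < c) (k p : ℕ) :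
    ∫ z : ℂ, ‖z‖ ^ (2*k) * ((c + ‖z‖ ^ 2) ^ (k+p+2))⁻¹
      = π * ((k.factorial * p.factorial / (k + p + 1).factorial) * (c ^ (p + 1))⁻¹) := by
  rw [← Complex.integral_comp_polarCoord_symm, polarCoord_target]
  calc
    _ = ∫ x in Ioi (0:ℝ) ×ˢ Ioo (-π) π,
          (x.1 ^ (2*k+1) * ((c + x.1 ^ 2) ^ (k+p+2))⁻¹) * 1 := by
      apply setIntegral_congr_fun (measurableSet_Ioi.prod measurableSet_Ioo)
      intro x hx
      obtain ⟨hx1, -⟩ := hx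
      rw [Set.mem_Ioi] at hx1
      simp only [Complex.norm_polarCoord_symm, smul_eq_mul, mul_one,
        abs_of_pos hx1]
      ring
    _ = (∫ x in Ioi (0:ℝ), x ^ (2*k+1) * ((c + x ^ 2) ^ (k+p+2))⁻¹) * ∫ _ in Ioo (-π) π, (1:ℝ) := by
      rw [Measure.volume_eq_prod, ← setIntegral_prod_mul]
    _ = π * ((k.factorial * p.factorial / (k + p + 1).factorial) * (c ^ (p + 1))⁻¹) := by
      have hsub := integral_comp_rpow_Ioi (fun s : ℝ => s ^ k * ((c + s) ^ (k+p+2))⁻¹)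
        (p := 2) (by norm_num)
      rw [int_val c hc p k] at hsub
      have heq : ∫ x in Ioi (0:ℝ), (|(2:ℝ)| * x ^ ((2:ℝ) - 1)) •
          ((x ^ (2:ℝ)) ^ k * ((c + x ^ (2:ℝ)) ^ (k+p+2))⁻¹)
          = ∫ x in Ioi (0:ℝ), 2 * (x ^ (2*k+1) * ((c + x ^ 2) ^ (k+p+2))⁻¹) := by
        apply setIntegral_congr_fun measurableSet_Ioi
        intro x hx
        rw [Set.mem_Ioi] at hx
        have h2 : x ^ (2:ℝ) = x ^ (2:ℕ) := by
          rw [← Real.rpow_natCast x 2]; norm_num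
        have h1 : x ^ ((2:ℝ) - 1) = x := by
          rw [show (2:ℝ)-1 = 1 by norm_num, Real.rpow_one]
        simp only [h2, h1, smul_eq_mul, abs_two]
        rw [← pow_mul]
        ring
      rw [heq, MeasureTheory.integral_const_mul] at hsub
      have h2 : ∫ x in Ioi (0:ℝ), x ^ (2*k+1) * ((c + x ^ 2) ^ (k+p+2))⁻¹
          = (k.factorial * p.factorial / (k + p + 1).factorial) * (c ^ (p + 1))⁻¹ / 2 := by
        rw [eq_div_iff (two_ne_zero)]
        linarith [hsub]
      rw [h2]
      simp only [integral_const, Measure.real, MeasurableSet.univ, Measure.restrict_apply, Set.univ_inter,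
        Real.volume_Ioo, smul_eq_mul, mul_one, sub_neg_eq_add, ← two_mul,
        ENNReal.toReal_ofReal (by positivity : (0:ℝ) ≤ 2 * π)]
      ring

lemma cvanish (c : ℝ) (k l m : ℕ) (hkl : k ≠ l) :
    ∫ z : ℂ, (starRingEnd ℂ) z ^ k * z ^ l * ((((c + ‖z‖ ^ 2 : ℝ)) : ℂ) ^ m)⁻¹ = 0 := by
  rw [← Complex.integral_comp_polarCoord_symm, polarCoord_target]
  set d : ℤ := (l : ℤ) - k with hd
  have hdne : (d : ℂ) ≠ 0 := by
    simp only [hd]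
    intro h
    apply hkl
    have : ((l:ℤ) : ℂ) = ((k:ℤ) : ℂ) := by push_cast at h ⊢; linear_combination h
    exact_mod_cast (Int.ofNat_inj.mp (by exact_mod_cast this)).symm
  calc
    _ = ∫ x in Ioi (0:ℝ) ×ˢ Ioo (-π) π,
          (((x.1 ^ (k+l+1) : ℝ) : ℂ) * ((((c + x.1 ^ 2 : ℝ)) : ℂ) ^ m)⁻¹)
            * Complex.exp ((d : ℂ) * Complex.I * (x.2 : ℝ)) := by
      apply setIntegral_congr_fun (measurableSet_Ioi.prod measurableSet_Ioo)
      rintro ⟨r, θ⟩ ⟨hr, -⟩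
      rw [Set.mem_Ioi] at hr
      dsimp only
      have hsymm : Complex.polarCoord.symm (r, θ) = r * Complex.exp (θ * Complex.I) := by
        rw [Complex.polarCoord_symm_apply, Complex.exp_mul_I]
        push_cast
        ring
      have habs : ‖Complex.polarCoord.symm (r, θ)‖ = r := by
        rw [Complex.norm_polarCoord_symm, abs_of_pos hr]
      have hconj : (starRingEnd ℂ) ((r:ℂ) * Complex.exp (↑θ * Complex.I))
          = (r:ℂ) * Complex.exp (-(↑θ * Complex.I)) := by
        rw [map_mul, Complex.conj_ofReal, ← Complex.exp_conj, map_mul, Complex.conj_ofReal,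
          Complex.conj_I, mul_neg]
      have e1 : Complex.exp (-(↑θ * Complex.I)) ^ k = Complex.exp (-(k:ℂ) * θ * Complex.I) := by
        rw [← Complex.exp_nat_mul]; ring_nf
      have e2 : Complex.exp ((↑θ * Complex.I)) ^ l = Complex.exp ((l:ℂ) * θ * Complex.I) := by
        rw [← Complex.exp_nat_mul]; ring_nf
      have e3 : Complex.exp (-(k:ℂ) * θ * Complex.I) * Complex.exp ((l:ℂ) * θ * Complex.I)
          = Complex.exp ((d:ℂ) * Complex.I * θ) := by
        rw [← Complex.exp_add]; congr 1; push_cast [hd]; ring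
      rw [habs, hsymm, Complex.real_smul, hconj, mul_pow, mul_pow, e1, e2]
      push_cast
      linear_combination ((r:ℂ)^k * (r:ℂ)^l * (r:ℂ) * ((((c:ℂ) + (r:ℂ)^2)) ^ m)⁻¹) * e3
    _ = (∫ r in Ioi (0:ℝ), ((r ^ (k+l+1) : ℝ) : ℂ) * ((((c + r ^ 2 : ℝ)) : ℂ) ^ m)⁻¹)
        * ∫ θ in Ioo (-π) π, Complex.exp ((d : ℂ) * Complex.I * (θ : ℝ)) := by
      rw [Measure.volume_eq_prod, ← setIntegral_prod_mul]
    _ = 0 := by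
      have hθ : ∫ θ in Ioo (-π) π, Complex.exp ((d : ℂ) * Complex.I * (θ : ℝ)) = 0 := by
        rw [← integral_Ioc_eq_integral_Ioo,
          ← intervalIntegral.integral_of_le (by linarith [pi_pos] : -π ≤ π),
          integral_exp_mul_complex (mul_ne_zero hdne Complex.I_ne_zero)]
        rw [div_eq_zero_iff]
        left
        rw [sub_eq_zero, show (d:ℂ)*Complex.I*(π:ℝ)
            = (d:ℂ)*Complex.I*((-π : ℝ):ℂ) + (d:ℂ) * (2*(π:ℝ)*Complex.I) by push_cast; ring,
          Complex.exp_add, Complex.exp_int_mul_two_pi_mul_I, mul_one]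
      rw [hθ, mul_zero]

set_option maxHeartbeats 1000000 in
lemma main_ind (n : ℕ) : ∀ (q : ℕ) (a : Fin n → ℕ) (c : ℝ), 0 < c →
    Integrable (fun w : Fin n → ℂ =>
      (∏ j, ‖w j‖ ^ (2 * a j)) *
        ((c + ∑ j, ‖w j‖ ^ 2) ^ (∑ j, a j + q + n + 1))⁻¹) ∧
    ∫ w : Fin n → ℂ, (∏ j, ‖w j‖ ^ (2 * a j)) *
        ((c + ∑ j, ‖w j‖ ^ 2) ^ (∑ j, a j + q + n + 1))⁻¹
      = π ^ n * ((∏ j, ((a j).factorial : ℝ)) * q.factorial / ((∑ j, a j + q + n).factorial))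
          * (c ^ (q + 1))⁻¹ := by
  induction n with
  | zero =>
    intro q a c hc
    have hprob : IsProbabilityMeasure (volume : Measure (Fin 0 → ℂ)) := by
      constructor
      rw [MeasureTheory.volume_pi, Measure.pi_univ]
      simp
    simp only [Finset.univ_eq_empty, Finset.prod_empty, Finset.sum_empty, one_mul, add_zero,
      zero_add]
    constructor
    · exact integrable_const _
    · rw [integral_const]
      simp [measure_univ]
      field_simp
  | succ n IH =>
    intro q a c hc
    set a0 := a 0 with ha0
    set a' : Fin n → ℕ := fun j => a j.succ with ha'
    have hsum : ∑ j, a j = a0 + ∑ j, a' j := by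
      rw [Fin.sum_univ_succ]
    set F : ℂ × (Fin n → ℂ) → ℝ := fun p =>
      ‖p.1‖ ^ (2*a0) * ((∏ j, ‖p.2 j‖ ^ (2 * a' j)) *
        (((c + ‖p.1‖ ^ 2) + ∑ j, ‖p.2 j‖ ^ 2)
          ^ (∑ j, a' j + (a0+q+1) + n + 1))⁻¹) with hF
    have hexp : ∀ z : ℂ, ∀ v : Fin n → ℂ,
        (fun w : Fin (n+1) → ℂ => (∏ j, ‖w j‖ ^ (2 * a j)) *
          ((c + ∑ j, ‖w j‖ ^ 2) ^ (∑ j, a j + q + (n+1) + 1))⁻¹)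
            (Fin.cons z v) = F (z, v) := by
      intro z v
      have he : ∑ j, a j + q + (n+1) + 1 = ∑ j, a' j + (a0+q+1) + n + 1 := by
        rw [hsum]; omega
      dsimp only
      rw [he, Fin.prod_univ_succ, Fin.sum_univ_succ]
      simp only [Fin.cons_zero, Fin.cons_succ, hF]
      ring
    -- measure preserving transfer
    have mp := measurePreserving_piFinSuccAbove (fun _ : Fin (n+1) => (volume : Measure ℂ)) 0
    have hFcont : Continuous F := by
      apply Continuous.mul
      · exact (continuous_norm.comp continuous_fst).pow _
      apply Continuous.mul
      · exact continuous_finset_prod _ fun j _ =>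
          ((continuous_norm.comp ((continuous_apply j).comp continuous_snd)).pow _)
      apply Continuous.inv₀
      · exact ((continuous_const.add ((continuous_norm.comp continuous_fst).pow 2)).add
          (continuous_finset_sum _ fun j _ =>
            ((continuous_norm.comp ((continuous_apply j).comp continuous_snd)).pow 2))).pow _
      intro p
      have h1 : 0 ≤ ‖p.1‖ ^ 2 := by positivity
      have h2 : 0 ≤ ∑ j, ‖p.2 j‖ ^ 2 :=
        Finset.sum_nonneg fun j _ => by positivity
      have h3 : 0 < (c + ‖p.1‖ ^ 2) + ∑ j, ‖p.2 j‖ ^ 2 := by linarith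
      exact pow_ne_zero _ (ne_of_gt h3)
    have hFnonneg : ∀ p, 0 ≤ F p := by
      intro p
      have h1 : 0 ≤ ∏ j, ‖p.2 j‖ ^ (2 * a' j) :=
        Finset.prod_nonneg fun j _ => by positivity
      have h2 : 0 ≤ ∑ j, ‖p.2 j‖ ^ 2 :=
        Finset.sum_nonneg fun j _ => by positivity
      have h3 : (0:ℝ) < c + ‖p.1‖ ^ 2 := by positivity
      simp only [hF]
      have h4 : (0:ℝ) < ((c + ‖p.1‖ ^ 2) + ∑ j, ‖p.2 j‖ ^ 2)
          ^ (∑ j, a' j + (a0+q+1) + n + 1) := by positivity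
      positivity
    -- sections integrable
    have hsec : ∀ z : ℂ, Integrable (fun v => F (z, v)) := by
      intro z
      have hc' : (0:ℝ) < c + ‖z‖ ^ 2 := by positivity
      have h := ((IH (a0+q+1) a' (c + ‖z‖ ^ 2) hc').1).const_mul
        (‖z‖ ^ (2*a0))
      exact h.congr (Eventually.of_forall fun v => rfl)
    have hsecval : ∀ z : ℂ, ∫ v, F (z, v)
        = (π ^ n * ((∏ j, ((a' j).factorial : ℝ)) * (a0+q+1).factorial
            / ((∑ j, a' j + (a0+q+1) + n).factorial)))
          * (‖z‖ ^ (2*a0) * (((c + ‖z‖ ^ 2) ^ ((a0+q)+ 1 + 1))⁻¹)) := by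
      intro z
      have hc' : (0:ℝ) < c + ‖z‖ ^ 2 := by positivity
      simp only [hF]
      rw [MeasureTheory.integral_const_mul, (IH (a0+q+1) a' (c + ‖z‖ ^ 2) hc').2]
      ring_nf
    have hFint : Integrable F := by
      rw [Measure.volume_eq_prod, MeasureTheory.integrable_prod_iff hFcont.aestronglyMeasurable]
      constructor
      · filter_upwards with z
        exact hsec z
      · apply Integrable.congr (((cint c hc a0 q).const_mul
          (π ^ n * ((∏ j, ((a' j).factorial : ℝ)) * (a0+q+1).factorial
            / ((∑ j, a' j + (a0+q+1) + n).factorial)))))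
        filter_upwards with z
        have hnorm : ∫ v, ‖F (z, v)‖ = ∫ v, F (z, v) :=
          integral_congr_ae (Eventually.of_forall fun v => Real.norm_of_nonneg (hFnonneg _))
        rw [hnorm, hsecval z]
    have he2 : ∀ w : Fin (n+1) → ℂ,
        (MeasurableEquiv.piFinSuccAbove (fun _ : Fin (n+1) => ℂ) 0) w = (w 0, Fin.tail w) := by
      intro w
      rfl
    have hcomp : (F ∘ (MeasurableEquiv.piFinSuccAbove (fun _ : Fin (n+1) => ℂ) 0))
        = (fun w : Fin (n+1) → ℂ => (∏ j, ‖w j‖ ^ (2 * a j)) *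
          ((c + ∑ j, ‖w j‖ ^ 2) ^ (∑ j, a j + q + (n+1) + 1))⁻¹) := by
      funext w
      rw [Function.comp_apply, he2 w, ← hexp (w 0) (Fin.tail w), Fin.cons_self_tail]
    have mp2 := volume_preserving_piFinSuccAbove (fun _ : Fin (n+1) => ℂ) 0
    have hintb : Integrable (fun w : Fin (n+1) → ℂ => (∏ j, ‖w j‖ ^ (2 * a j)) *
        ((c + ∑ j, ‖w j‖ ^ 2) ^ (∑ j, a j + q + (n+1) + 1))⁻¹) := by
      rw [← hcomp]
      exact (mp2.integrable_comp_emb (MeasurableEquiv.measurableEmbedding _)).2 hFint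
    refine ⟨hintb, ?_⟩
    have hIeq : ∫ w : Fin (n+1) → ℂ, (∏ j, ‖w j‖ ^ (2 * a j)) *
        ((c + ∑ j, ‖w j‖ ^ 2) ^ (∑ j, a j + q + (n+1) + 1))⁻¹ = ∫ p, F p := by
      rw [← hcomp]
      exact mp2.integral_comp (MeasurableEquiv.measurableEmbedding _) F
    rw [hIeq, Measure.volume_eq_prod, MeasureTheory.integral_prod _ (by
      rw [← Measure.volume_eq_prod]; exact hFint)]
    calc ∫ z : ℂ, ∫ v : Fin n → ℂ, F (z, v)
        = ∫ z : ℂ, (π ^ n * ((∏ j, ((a' j).factorial : ℝ)) * (a0+q+1).factorial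
            / ((∑ j, a' j + (a0+q+1) + n).factorial)))
          * (‖z‖ ^ (2*a0) * (((c + ‖z‖ ^ 2) ^ (a0+q+2))⁻¹)) := by
          exact integral_congr_ae (Eventually.of_forall fun z => hsecval z)
      _ = (π ^ n * ((∏ j, ((a' j).factorial : ℝ)) * (a0+q+1).factorial
            / ((∑ j, a' j + (a0+q+1) + n).factorial)))
          * (π * ((a0.factorial * q.factorial / (a0 + q + 1).factorial) * (c ^ (q + 1))⁻¹)) := by
          rw [MeasureTheory.integral_const_mul, cval c hc a0 q]
      _ = π ^ (n+1) * ((∏ j, ((a j).factorial : ℝ)) * q.factorial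
            / ((∑ j, a j + q + (n+1)).factorial)) * (c ^ (q + 1))⁻¹ := by
          rw [Fin.prod_univ_succ]
          rw [show ∑ j, a j + q + (n+1) = ∑ j, a' j + (a0+q+1) + n by rw [hsum]; ring]
          have h1 : ((∑ j, a' j + (a0+q+1) + n).factorial : ℝ) ≠ 0 := by
            exact_mod_cast Nat.factorial_ne_zero _
          have h2 : ((a0 + q + 1).factorial : ℝ) ≠ 0 := by
            exact_mod_cast Nat.factorial_ne_zero _
          field_simp
          ring

lemma diag (n N : ℕ) (a : Fin n → ℕ) (ha : ∑ j, a j ≤ N) :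
    ∫ w : Fin n → ℂ,
        (∏ j, (starRingEnd ℂ) (w j) ^ a j) * (∏ j, w j ^ a j) /
          (((1 + ∑ j, ‖w j‖ ^ 2 : ℝ) : ℂ)) ^ (N + n + 1) =
      ((Real.pi ^ n * (∏ j, Nat.factorial (a j) : ℕ) *
          (Nat.factorial (N - ∑ j, a j) : ℝ) / (Nat.factorial (N + n) : ℝ) : ℝ) : ℂ) := by
  have hpt : ∀ w : Fin n → ℂ,
      (∏ j, (starRingEnd ℂ) (w j) ^ a j) * (∏ j, w j ^ a j) /
          (((1 + ∑ j, ‖w j‖ ^ 2 : ℝ) : ℂ)) ^ (N + n + 1)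
      = ((((∏ j, ‖w j‖ ^ (2 * a j)) *
          ((1 + ∑ j, ‖w j‖ ^ 2) ^ (N + n + 1))⁻¹ : ℝ)) : ℂ) := by
    intro w
    rw [← Finset.prod_mul_distrib]
    have h1 : ∀ j, (starRingEnd ℂ) (w j) ^ a j * w j ^ a j
        = ((‖w j‖ ^ (2 * a j) : ℝ) : ℂ) := by
      intro j
      rw [← mul_pow, mul_comm, Complex.mul_conj, ← Complex.ofReal_pow]
      congr 1
      rw [Complex.normSq_eq_norm_sq, ← pow_mul]
    rw [Finset.prod_congr rfl (fun j _ => h1 j), ← Complex.ofReal_prod, div_eq_mul_inv]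
    push_cast
    ring
  simp only [hpt]
  refine (integral_ofReal (𝕜 := ℂ)).trans ?_
  congr 1
  have hE : ∑ j, a j + (N - ∑ j, a j) + n + 1 = N + n + 1 := by omega
  have hE2 : ∑ j, a j + (N - ∑ j, a j) + n = N + n := by omega
  have h := (main_ind n (N - ∑ j, a j) a 1 one_pos).2
  rw [hE, hE2] at h
  have hgoal : (∫ w : Fin n → ℂ, (∏ j, ‖w j‖ ^ (2 * a j)) *
      ((1 + ∑ j, ‖w j‖ ^ 2) ^ (N + n + 1))⁻¹)
      = π ^ n * ((∏ j, (a j).factorial : ℕ) : ℝ) * ((N - ∑ j, a j).factorial : ℝ)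
          / ((N + n).factorial : ℝ) := by
    rw [h, one_pow, inv_one, mul_one, Nat.cast_prod]
    ring
  exact hgoal

set_option maxHeartbeats 1000000 in
lemma offdiag (n N : ℕ) (a b : Fin (n+1) → ℕ) (ha : ∑ j, a j ≤ N) (hb : ∑ j, b j ≤ N)
    (j0 : Fin (n+1)) (hj : a j0 ≠ b j0) :
    ∫ w : Fin (n+1) → ℂ,
        (∏ j, (starRingEnd ℂ) (w j) ^ a j) * (∏ j, w j ^ b j) /
          (((1 + ∑ j, ‖w j‖ ^ 2 : ℝ) : ℂ)) ^ (N + (n+1) + 1) = 0 := by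
  set m := N + (n+1) + 1 with hm
  set f : (Fin (n+1) → ℂ) → ℂ := fun w =>
    (∏ j, (starRingEnd ℂ) (w j) ^ a j) * (∏ j, w j ^ b j) /
      (((1 + ∑ j, ‖w j‖ ^ 2 : ℝ) : ℂ)) ^ m with hf
  set Fa : (Fin (n+1) → ℂ) → ℝ := fun w => (∏ j, ‖w j‖ ^ (2 * a j)) *
      ((1 + ∑ j, ‖w j‖ ^ 2) ^ m)⁻¹ with hFa
  set Fb : (Fin (n+1) → ℂ) → ℝ := fun w => (∏ j, ‖w j‖ ^ (2 * b j)) *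
      ((1 + ∑ j, ‖w j‖ ^ 2) ^ m)⁻¹ with hFb
  have hFaint : Integrable Fa := by
    have h := (main_ind (n+1) (N - ∑ j, a j) a 1 one_pos).1
    rw [show ∑ j, a j + (N - ∑ j, a j) + (n+1) + 1 = m from by omega] at h
    exact h
  have hFbint : Integrable Fb := by
    have h := (main_ind (n+1) (N - ∑ j, b j) b 1 one_pos).1
    rw [show ∑ j, b j + (N - ∑ j, b j) + (n+1) + 1 = m from by omega] at h
    exact h
  have hfc : Continuous f := by
    apply Continuous.div
    · exact (continuous_finset_prod _ fun j _ =>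
        (Complex.continuous_conj.comp (continuous_apply j)).pow _).mul
        (continuous_finset_prod _ fun j _ => (continuous_apply j).pow _)
    · exact (Complex.continuous_ofReal.comp (continuous_const.add
        (continuous_finset_sum _ fun j _ =>
          ((continuous_norm.comp (continuous_apply j)).pow 2)))).pow _
    · intro w
      apply pow_ne_zero
      rw [Ne, Complex.ofReal_eq_zero]
      have h2 : 0 ≤ ∑ j, ‖w j‖ ^ 2 := Finset.sum_nonneg fun j _ => by positivity
      intro hzero
      linarith
  have hbound : ∀ w : Fin (n+1) → ℂ, ‖f w‖ ≤ (2:ℝ)⁻¹ * (Fa w + Fb w) := by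
    intro w
    have h2 : 0 ≤ ∑ j, ‖w j‖ ^ 2 := Finset.sum_nonneg fun j _ => by positivity
    have hDpos : (0:ℝ) < 1 + ∑ j, ‖w j‖ ^ 2 := by linarith
    simp only [hf, hFa, hFb]
    rw [norm_div, norm_mul, norm_prod, norm_prod, norm_pow]
    simp only [norm_pow, Complex.norm_conj, Complex.norm_real, Real.norm_eq_abs,
      abs_of_pos hDpos]
    set u := ∏ j, ‖w j‖ ^ a j with hu
    set v := ∏ j, ‖w j‖ ^ b j with hv
    have hun : 0 ≤ u := Finset.prod_nonneg fun j _ => by positivity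
    have hvn : 0 ≤ v := Finset.prod_nonneg fun j _ => by positivity
    have e1 : ∏ j, ‖w j‖ ^ (2 * a j) = u ^ 2 := by
      rw [hu, ← Finset.prod_pow]
      exact Finset.prod_congr rfl fun j _ => by rw [← pow_mul, mul_comm]
    have e2 : ∏ j, ‖w j‖ ^ (2 * b j) = v ^ 2 := by
      rw [hv, ← Finset.prod_pow]
      exact Finset.prod_congr rfl fun j _ => by rw [← pow_mul, mul_comm]
    rw [e1, e2, div_eq_mul_inv]
    have key : u * v ≤ 2⁻¹ * (u ^ 2 + v ^ 2) := by nlinarith [sq_nonneg (u - v)]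
    have hDm : (0:ℝ) ≤ ((1 + ∑ j, ‖w j‖ ^ 2) ^ m)⁻¹ := by positivity
    calc u * v * ((1 + ∑ j, ‖w j‖ ^ 2) ^ m)⁻¹
        ≤ (2⁻¹ * (u ^ 2 + v ^ 2)) * ((1 + ∑ j, ‖w j‖ ^ 2) ^ m)⁻¹ :=
          mul_le_mul_of_nonneg_right key hDm
      _ = 2⁻¹ * (u ^ 2 * ((1 + ∑ j, ‖w j‖ ^ 2) ^ m)⁻¹
          + v ^ 2 * ((1 + ∑ j, ‖w j‖ ^ 2) ^ m)⁻¹) := by ring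
  have hfint : Integrable f :=
    Integrable.mono' ((hFaint.add hFbint).const_mul (2:ℝ)⁻¹) hfc.aestronglyMeasurable
      (Eventually.of_forall hbound)
  -- transfer to product
  set e := MeasurableEquiv.piFinSuccAbove (fun _ : Fin (n+1) => ℂ) j0 with he
  have mp := volume_preserving_piFinSuccAbove (fun _ : Fin (n+1) => ℂ) j0
  have hcomp : (f ∘ e.symm) ∘ e = f := by
    funext w
    simp only [Function.comp_apply, MeasurableEquiv.symm_apply_apply]
  have hIeq : ∫ w, f w = ∫ p, (f ∘ e.symm) p := by
    conv_lhs => rw [← hcomp]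
    exact mp.integral_comp (MeasurableEquiv.measurableEmbedding _) (f ∘ e.symm)
  have hGint : Integrable (f ∘ e.symm) := by
    refine ((mp.symm e).integrable_comp_emb (MeasurableEquiv.measurableEmbedding _)).2 ?_
    exact hfint
  have hGeq : ∀ z : ℂ, ∀ v : Fin n → ℂ, (f ∘ e.symm) (z, v)
      = ((∏ j, (starRingEnd ℂ) (v j) ^ a (j0.succAbove j)) * ∏ j, (v j) ^ b (j0.succAbove j)) *
        ((starRingEnd ℂ) z ^ a j0 * z ^ b j0 *
          (((((1 + ∑ j, ‖v j‖ ^ 2) + ‖z‖ ^ 2 : ℝ)) : ℂ) ^ m)⁻¹) := by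
    intro z v
    have hs : e.symm (z, v) = Fin.insertNth j0 z v := by
      simp [he, MeasurableEquiv.piFinSuccAbove_symm_apply, Fin.insertNthEquiv]
    rw [Function.comp_apply, hs, hf]
    dsimp only
    rw [Fin.prod_univ_succAbove _ j0, Fin.prod_univ_succAbove _ j0, Fin.sum_univ_succAbove _ j0]
    simp only [Fin.insertNth_apply_same, Fin.insertNth_apply_succAbove]
    rw [show (1 + (‖z‖ ^ 2 + ∑ j, ‖v j‖ ^ 2) : ℝ)
        = ((1 + ∑ j, ‖v j‖ ^ 2) + ‖z‖ ^ 2 : ℝ) from by ring,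
      div_eq_mul_inv]
    ring
  rw [hIeq, Measure.volume_eq_prod, MeasureTheory.integral_prod_symm _ (by
    rw [← Measure.volume_eq_prod]; exact hGint)]
  have hzero : ∀ v : Fin n → ℂ, (∫ z : ℂ, (f ∘ e.symm) (z, v)) = 0 := by
    intro v
    have hcongr : (fun z : ℂ => (f ∘ e.symm) (z, v))
        = fun z : ℂ => ((∏ j, (starRingEnd ℂ) (v j) ^ a (j0.succAbove j))
            * ∏ j, (v j) ^ b (j0.succAbove j)) *
          ((starRingEnd ℂ) z ^ a j0 * z ^ b j0 *
            (((((1 + ∑ j, ‖v j‖ ^ 2) + ‖z‖ ^ 2 : ℝ)) : ℂ) ^ m)⁻¹) :=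
      funext fun z => hGeq z v
    rw [hcongr, MeasureTheory.integral_const_mul,
      cvanish (1 + ∑ j, ‖v j‖ ^ 2) (a j0) (b j0) m hj, mul_zero]
  calc (∫ v : Fin n → ℂ, ∫ z : ℂ, (f ∘ e.symm) (z, v))
      = ∫ v : Fin n → ℂ, (0:ℂ) := by
        exact integral_congr_ae (Eventually.of_forall fun v => hzero v)
    _ = 0 := integral_zero _ _

theorem stmt_14 (n N : ℕ) (a b : Fin n → ℕ) (ha : ∑ j, a j ≤ N) (hb : ∑ j, b j ≤ N) :
    (a ≠ b →
      ∫ w : Fin n → ℂ,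
          (∏ j, (starRingEnd ℂ) (w j) ^ a j) * (∏ j, w j ^ b j) /
            (((1 + ∑ j, ‖w j‖ ^ 2 : ℝ) : ℂ)) ^ (N + n + 1) = 0) ∧
    ∫ w : Fin n → ℂ,
        (∏ j, (starRingEnd ℂ) (w j) ^ a j) * (∏ j, w j ^ a j) /
          (((1 + ∑ j, ‖w j‖ ^ 2 : ℝ) : ℂ)) ^ (N + n + 1) =
      ((Real.pi ^ n * (∏ j, Nat.factorial (a j) : ℕ) *
          (Nat.factorial (N - ∑ j, a j) : ℝ) / (Nat.factorial (N + n) : ℝ) : ℝ) : ℂ) := by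
  constructor
  · intro hne
    cases n with
    | zero => exact absurd (funext fun j => j.elim0) hne
    | succ n' =>
      obtain ⟨j0, hj⟩ := Function.ne_iff.mp hne
      exact offdiag n' N a b ha hb j0 hj
  · exact _root_.diag n N a ha
end

section
/- Let N ∈ ℕ, a ∈ ℕ^n with |a| < N, and define u(r) = (∏_j r_j^{a_j}) (1 + ∑_j r_j²)^{-N/2} on [0,∞)^n. Then u attains its global maximum at the point r* with r*_j = √(a_j/(N − |a|)), and the maximum value is (N−|a|)^{(N−|a|)/2} N^{-N/2} ∏_j a_j^{a_j/2} (with convention 0^0 = 1). -/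
open MeasureTheory Finset

lemma rpow_sum'' {ι : Type*} {x : ℝ} (hx : 0 < x) (s : Finset ι) (c : ι → ℝ) :
    ∏ i ∈ s, x ^ c i = x ^ (∑ i ∈ s, c i) := by
  induction s using Finset.cons_induction with
  | empty => simp
  | cons a s h ih => rw [prod_cons, sum_cons, Real.rpow_add hx, ih]

lemma sqrt_pow'' {x : ℝ} (hx : 0 ≤ x) (k : ℕ) :
    Real.sqrt x ^ k = x ^ ((k : ℝ) / 2) := by
  rw [Real.sqrt_eq_rpow, ← Real.rpow_natCast (x ^ (1/2 : ℝ)) k, ← Real.rpow_mul hx]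
  congr 1; ring

lemma rpow_sq'' {x : ℝ} (hx : 0 ≤ x) (c : ℝ) : (x ^ c) ^ 2 = x ^ (c * 2) := by
  rw [← Real.rpow_natCast (x ^ c) 2, ← Real.rpow_mul hx]
  norm_num

lemma key_amgm (n N : ℕ) (a : Fin n → ℕ) (ha : ∑ j, a j < N) (t : Fin n → ℝ)
    (ht : ∀ j, 0 ≤ t j) :
    (N : ℝ) ^ N * ∏ j, t j ^ a j ≤
      ((N : ℝ) - (∑ j, a j : ℕ)) ^ (N - ∑ j, a j) * (∏ j, (a j : ℝ) ^ a j) *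
        (1 + ∑ j, t j) ^ N := by
  set s : ℕ := ∑ j, a j with hs
  have hNpos : (0 : ℝ) < N := by exact_mod_cast Nat.pos_of_ne_zero (by omega)
  have hMpos : (0 : ℝ) < (N : ℝ) - s := by
    have : (s : ℝ) < N := by exact_mod_cast ha
    linarith
  set M : ℝ := (N : ℝ) - s with hM
  -- weights and values on Option (Fin n)
  set w : Option (Fin n) → ℝ := fun o => o.elim (M / N) (fun j => (a j : ℝ) / N) with hw
  set z : Option (Fin n) → ℝ := fun o => o.elim ((N : ℝ) / M) (fun j => (N : ℝ) * t j / (a j : ℝ)) with hz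
  have hwnn : ∀ o ∈ (univ : Finset (Option (Fin n))), 0 ≤ w o := by
    rintro (_ | j) _ <;> simp [hw] <;> positivity
  have hzt : ∀ j, 0 ≤ (N : ℝ) * t j / (a j : ℝ) := fun j =>
    div_nonneg (mul_nonneg hNpos.le (ht j)) (Nat.cast_nonneg _)
  have hznn : ∀ o ∈ (univ : Finset (Option (Fin n))), 0 ≤ z o := by
    rintro (_ | j) _
    · simp only [hz, Option.elim]; positivity
    · simpa [hz] using hzt j
  have hw1 : ∑ o, w o = 1 := by
    rw [Fintype.sum_option]
    simp only [hw, Option.elim]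
    have hcast : ((s : ℕ) : ℝ) = ∑ x : Fin n, ((a x) : ℝ) := by rw [hs]; push_cast; ring
    rw [← Finset.sum_div]
    rw [← hcast, hM]
    field_simp
    ring
  have hsum : ∑ o, w o * z o ≤ 1 + ∑ j, t j := by
    rw [Fintype.sum_option]
    simp only [hw, hz, Option.elim]
    have h1 : M / N * ((N : ℝ) / M) = 1 := by field_simp
    rw [h1]
    gcongr 1 + ?_
    apply Finset.sum_le_sum
    intro j _
    rcases eq_or_ne (a j) 0 with h | h
    · simp [h]; exact ht j
    · have : (a j : ℝ) ≠ 0 := Nat.cast_ne_zero.mpr h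
      rw [div_mul_div_comm]
      rw [div_le_iff₀ (by positivity)]
      ring_nf
      nlinarith [ht j, sq_nonneg ((a j : ℝ))]
  have amgm := Real.geom_mean_le_arith_mean_weighted univ w z hwnn hw1 hznn
  have key1 : ∏ o, z o ^ w o ≤ 1 + ∑ j, t j := amgm.trans hsum
  have hprodnn : 0 ≤ ∏ o, z o ^ w o :=
    Finset.prod_nonneg fun o _ => Real.rpow_nonneg (hznn o (mem_univ o)) _
  have e1 : (∏ o, z o ^ w o) ^ N =
      ((N : ℝ) / M) ^ (N - s) * ∏ j, ((N : ℝ) * t j / (a j : ℝ)) ^ (a j) := by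
    rw [← Finset.prod_pow, Fintype.prod_option]
    congr 1
    · simp only [hz, hw, Option.elim]
      rw [← Real.rpow_natCast ((N / M : ℝ) ^ (M / (N:ℝ))) N, ← Real.rpow_mul (by positivity),
        div_mul_cancel₀ _ hNpos.ne', hM, ← Nat.cast_sub ha.le, Real.rpow_natCast]
    · apply Finset.prod_congr rfl; intro j _
      simp only [hz, hw, Option.elim]
      rw [← Real.rpow_natCast (((N : ℝ) * t j / (a j : ℝ)) ^ ((a j : ℝ) / N)) N,
        ← Real.rpow_mul (hzt j), div_mul_cancel₀ _ hNpos.ne', Real.rpow_natCast]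
  have key3 : ((N : ℝ) / M) ^ (N - s) * ∏ j, ((N : ℝ) * t j / (a j : ℝ)) ^ (a j) ≤
      (1 + ∑ j, t j) ^ N := by
    rw [← e1]; exact pow_le_pow_left₀ hprodnn key1 N
  have e2 : ∏ j, ((N : ℝ) * t j / (a j : ℝ)) ^ (a j) =
      (N : ℝ) ^ s * (∏ j, t j ^ a j) / ∏ j, (a j : ℝ) ^ a j := by
    calc ∏ j, ((N : ℝ) * t j / (a j : ℝ)) ^ (a j)
        = ∏ j, ((N : ℝ) ^ a j * t j ^ a j / (a j : ℝ) ^ a j) :=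
          Finset.prod_congr rfl fun j _ => by rw [div_pow, mul_pow]
      _ = (∏ j, (N : ℝ) ^ a j * t j ^ a j) / ∏ j, (a j : ℝ) ^ a j :=
          Finset.prod_div_distrib _ _
      _ = (N : ℝ) ^ s * (∏ j, t j ^ a j) / ∏ j, (a j : ℝ) ^ a j := by
          rw [Finset.prod_mul_distrib, Finset.prod_pow_eq_pow_sum]
  have hA : (0 : ℝ) < ∏ j, (a j : ℝ) ^ a j := by
    apply Finset.prod_pos
    intro j _
    rcases eq_or_ne (a j) 0 with h | h
    · simp [h]
    · exact pow_pos (by exact_mod_cast Nat.pos_of_ne_zero h) _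
  rw [e2, div_pow, div_mul_div_comm, ← mul_assoc, ← pow_add, Nat.sub_add_cancel ha.le,
    div_le_iff₀ (by positivity)] at key3
  calc (N : ℝ) ^ N * ∏ j, t j ^ a j
      ≤ (1 + ∑ j, t j) ^ N * (M ^ (N - s) * ∏ j, (a j : ℝ) ^ a j) := key3
    _ = M ^ (N - s) * (∏ j, (a j : ℝ) ^ a j) * (1 + ∑ j, t j) ^ N := by ring


theorem stmt_16 (n N : ℕ) (a : Fin n → ℕ) (ha : ∑ j, a j < N) :
    (∀ r : Fin n → ℝ, (∀ j, 0 ≤ r j) →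
        (∏ j, r j ^ a j) * (1 + ∑ j, r j ^ 2) ^ (-(N : ℝ) / 2) ≤
          (∏ j, (Real.sqrt ((a j : ℝ) / ((N : ℝ) - ∑ i, a i))) ^ a j) *
            (1 + ∑ j, Real.sqrt ((a j : ℝ) / ((N : ℝ) - ∑ i, a i)) ^ 2) ^ (-(N : ℝ) / 2)) ∧
      (∏ j, (Real.sqrt ((a j : ℝ) / ((N : ℝ) - ∑ i, a i))) ^ a j) *
          (1 + ∑ j, Real.sqrt ((a j : ℝ) / ((N : ℝ) - ∑ i, a i)) ^ 2) ^ (-(N : ℝ) / 2) =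
        ((N : ℝ) - ∑ j, a j) ^ (((N : ℝ) - ∑ j, a j) / 2) * (N : ℝ) ^ (-(N : ℝ) / 2) *
          ∏ j, (a j : ℝ) ^ ((a j : ℝ) / 2) := by
  have hamgm := key_amgm n N a ha
  set s : ℕ := ∑ j, a j with hs
  set Mr : ℝ := (N : ℝ) - s with hMrdef
  have hMr : 0 < Mr := by
    have : (s : ℝ) < N := by exact_mod_cast ha
    rw [hMrdef]; linarith
  have hMcast : Mr = ((N - s : ℕ) : ℝ) := by rw [hMrdef, Nat.cast_sub ha.le]
  have hNnn : (0 : ℝ) ≤ N := Nat.cast_nonneg N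
  have h1 : ∀ j, (0 : ℝ) ≤ (a j : ℝ) / Mr := fun j => by positivity
  have heq : (∏ j, (Real.sqrt ((a j : ℝ) / Mr)) ^ a j) *
          (1 + ∑ j, Real.sqrt ((a j : ℝ) / Mr) ^ 2) ^ (-(N : ℝ) / 2) =
        Mr ^ (Mr / 2) * (N : ℝ) ^ (-(N : ℝ) / 2) *
          ∏ j, (a j : ℝ) ^ ((a j : ℝ) / 2) := by
    have hS : (1 : ℝ) + ∑ j, Real.sqrt ((a j : ℝ) / Mr) ^ 2 = (N : ℝ) / Mr := by
      have h2 : ∀ j, Real.sqrt ((a j : ℝ) / Mr) ^ 2 = (a j : ℝ) / Mr := fun j =>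
        Real.sq_sqrt (h1 j)
      have hcast' : (∑ i, ((a i) : ℝ)) = (s : ℝ) := by rw [hs]; push_cast; ring
      rw [Finset.sum_congr rfl fun j _ => h2 j, ← Finset.sum_div, hcast', hMrdef]
      have hne : (N : ℝ) - s ≠ 0 := hMr.ne'
      rw [eq_div_iff hne, add_mul, div_mul_cancel₀ _ hne]; ring
    have hP : ∏ j, Real.sqrt ((a j : ℝ) / Mr) ^ a j =
        (∏ j, (a j : ℝ) ^ ((a j : ℝ) / 2)) * Mr ^ (-(s : ℝ) / 2) := by
      have step : ∀ j, Real.sqrt ((a j : ℝ) / Mr) ^ a j =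
          (a j : ℝ) ^ ((a j : ℝ) / 2) / Mr ^ ((a j : ℝ) / 2) := fun j => by
        rw [sqrt_pow'' (h1 j), Real.div_rpow (Nat.cast_nonneg _) hMr.le]
      have hcast' : (∑ i, ((a i) : ℝ)) = (s : ℝ) := by rw [hs]; push_cast; ring
      rw [Finset.prod_congr rfl fun j _ => step j, Finset.prod_div_distrib,
        rpow_sum'' hMr, div_eq_mul_inv, ← Real.rpow_neg hMr.le]
      congr 1
      rw [← Finset.sum_div, hcast']
      ring
    have hQ : ((N : ℝ) / Mr) ^ (-(N : ℝ) / 2) =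
        (N : ℝ) ^ (-(N : ℝ) / 2) * Mr ^ ((N : ℝ) / 2) := by
      rw [Real.div_rpow (Nat.cast_nonneg N) hMr.le, div_eq_mul_inv, ← Real.rpow_neg hMr.le]
      congr 1; ring
    rw [hS, hP, hQ]
    calc (∏ j, (a j : ℝ) ^ ((a j : ℝ) / 2)) * Mr ^ (-(s : ℝ) / 2) *
          ((N : ℝ) ^ (-(N : ℝ) / 2) * Mr ^ ((N : ℝ) / 2))
        = (∏ j, (a j : ℝ) ^ ((a j : ℝ) / 2)) * (N : ℝ) ^ (-(N : ℝ) / 2) *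
          (Mr ^ (-(s : ℝ) / 2) * Mr ^ ((N : ℝ) / 2)) := by ring
      _ = (∏ j, (a j : ℝ) ^ ((a j : ℝ) / 2)) * (N : ℝ) ^ (-(N : ℝ) / 2) *
          Mr ^ (-(s : ℝ) / 2 + (N : ℝ) / 2) := by rw [← Real.rpow_add hMr]
      _ = Mr ^ (Mr / 2) * (N : ℝ) ^ (-(N : ℝ) / 2) * ∏ j, (a j : ℝ) ^ ((a j : ℝ) / 2) := by
          rw [show -(s : ℝ) / 2 + (N : ℝ) / 2 = Mr / 2 by rw [hMrdef]; ring]; ring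
  refine ⟨?_, heq⟩
  intro r hr
  rw [heq]
  set W : ℝ := Mr ^ (Mr / 2) * (N : ℝ) ^ (-(N : ℝ) / 2) *
    ∏ j, (a j : ℝ) ^ ((a j : ℝ) / 2) with hW
  set S : ℝ := 1 + ∑ j, r j ^ 2 with hSdef
  have hSpos : (0 : ℝ) < S := by rw [hSdef]; positivity
  have hLnn : 0 ≤ (∏ j, r j ^ a j) * S ^ (-(N : ℝ) / 2) :=
    mul_nonneg (Finset.prod_nonneg fun j _ => pow_nonneg (hr j) _)
      (Real.rpow_nonneg hSpos.le _)
  have hWnn : 0 ≤ W := by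
    rw [hW]
    refine mul_nonneg (mul_nonneg (Real.rpow_nonneg hMr.le _) (Real.rpow_nonneg hNnn _)) ?_
    exact Finset.prod_nonneg fun j _ => Real.rpow_nonneg (Nat.cast_nonneg _) _
  refine (pow_le_pow_iff_left₀ hLnn hWnn two_ne_zero).mp ?_
  have eL : ((∏ j, r j ^ a j) * S ^ (-(N : ℝ) / 2)) ^ 2 =
      (∏ j, (r j ^ 2) ^ a j) * (S ^ (N : ℕ))⁻¹ := by
    rw [mul_pow]
    congr 1
    · rw [← Finset.prod_pow]
      exact Finset.prod_congr rfl fun j _ => by rw [← pow_mul, mul_comm (a j) 2, pow_mul]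
    · rw [rpow_sq'' hSpos.le, show -(N : ℝ) / 2 * 2 = -(N : ℝ) by ring,
        Real.rpow_neg hSpos.le, Real.rpow_natCast]
  have eW : W ^ 2 = Mr ^ (N - s) * ((N : ℝ) ^ (N : ℕ))⁻¹ * ∏ j, (a j : ℝ) ^ a j := by
    rw [hW, mul_pow, mul_pow]
    congr 1
    · congr 1
      · calc (Mr ^ (Mr / 2)) ^ 2 = Mr ^ (Mr / 2 * 2) := rpow_sq'' hMr.le _
          _ = Mr ^ ((N - s : ℕ) : ℝ) := by rw [show Mr / 2 * 2 = Mr by ring, hMcast]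
          _ = Mr ^ (N - s) := Real.rpow_natCast Mr (N - s)
      · rw [rpow_sq'' hNnn, show -(N : ℝ) / 2 * 2 = -(N : ℝ) by ring,
          Real.rpow_neg hNnn, Real.rpow_natCast]
    · rw [← Finset.prod_pow]
      refine Finset.prod_congr rfl fun j _ => ?_
      rw [rpow_sq'' (Nat.cast_nonneg _), show ((a j : ℝ)) / 2 * 2 = ((a j : ℕ) : ℝ) by ring,
        Real.rpow_natCast]
  rw [eL, eW]
  have key := hamgm (fun j => r j ^ 2) (fun j => sq_nonneg _)
  beta_reduce at key
  rw [← hSdef] at key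
  have hSN : (0 : ℝ) < S ^ (N : ℕ) := pow_pos hSpos N
  have hNN : (0 : ℝ) < (N : ℝ) ^ (N : ℕ) := by
    have : (0 : ℝ) < N := by exact_mod_cast Nat.pos_of_ne_zero (by omega)
    positivity
  rw [← div_eq_mul_inv, div_le_iff₀ hSN, ← mul_le_mul_iff_right₀ hNN]
  refine key.trans_eq ?_
  field_simp
end

section
/- Fix p ≥ 2 real. Let k_N = ⌊N/2⌋. Then as N → ∞, B((p/2)(N − k_N) + 1, (p/2)k_N + 1) ~ √(π/p) · 2^{-pN/2} · N^{-1/2}, where B is the Euler Beta function. -/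
/-- The Euler Beta function `B(x,y) = Γ(x)Γ(y)/Γ(x+y)`. -/
noncomputable def eulerBeta (x y : ℝ) : ℝ :=
  Real.Gamma x * Real.Gamma y / Real.Gamma (x + y)

open Real Filter Topology

lemma gamma_interp {x y t : ℝ} (hx : 0 < x) (hy : 0 < y) (ht : 0 ≤ t) (ht1 : t ≤ 1) :
    Gamma (t * x + (1 - t) * y) ≤ Gamma x ^ t * Gamma y ^ (1 - t) := by
  have hc : 0 < t * x + (1 - t) * y := by
    rcases eq_or_lt_of_le ht with h | h
    · simp [← h, hy]
    · nlinarith [mul_nonneg (by linarith : (0:ℝ) ≤ 1 - t) hy.le, mul_pos h hx]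
  have h := Real.convexOn_log_Gamma.2 (Set.mem_Ioi.2 hx) (Set.mem_Ioi.2 hy) ht
    (by linarith : (0:ℝ) ≤ 1 - t) (by ring)
  simp only [smul_eq_mul, Function.comp_apply] at h
  have h2 := Real.exp_le_exp.2 h
  calc Gamma (t * x + (1 - t) * y) = rexp (log (Gamma (t * x + (1 - t) * y))) :=
        (Real.exp_log (Gamma_pos_of_pos hc)).symm
    _ ≤ rexp (t * log (Gamma x) + (1 - t) * log (Gamma y)) := h2
    _ = Gamma x ^ t * Gamma y ^ (1 - t) := by
        rw [Real.exp_add, Real.rpow_def_of_pos (Gamma_pos_of_pos hx),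
          Real.rpow_def_of_pos (Gamma_pos_of_pos hy), mul_comm t, mul_comm (1 - t)]

lemma aux_div_add (a : ℝ) : Tendsto (fun s : ℝ => s / (s + a)) atTop (𝓝 1) := by
  have h1 : Tendsto (fun s : ℝ => s + a) atTop atTop := tendsto_atTop_add_const_right _ a tendsto_id
  have h0 : Tendsto (fun s : ℝ => a / (s + a)) atTop (𝓝 0) := tendsto_const_nhds.div_atTop h1
  have h : Tendsto (fun s : ℝ => 1 - a / (s + a)) atTop (𝓝 1) := by
    simpa using tendsto_const_nhds.sub h0
  refine h.congr' ?_
  filter_upwards [eventually_gt_atTop (|a| + 1)] with s hs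
  have hsa : 0 < s + a := by
    have := neg_abs_le a
    linarith
  field_simp
  ring

lemma aux_add_div (b : ℝ) : Tendsto (fun s : ℝ => (s + b) / s) atTop (𝓝 1) := by
  have h0 : Tendsto (fun s : ℝ => b / s) atTop (𝓝 0) := tendsto_const_nhds.div_atTop tendsto_id
  have h : Tendsto (fun s : ℝ => 1 + b / s) atTop (𝓝 1) := by
    simpa using tendsto_const_nhds.add h0
  refine h.congr' ?_
  filter_upwards [eventually_gt_atTop 0] with s hs
  field_simp

lemma wendel01 {a : ℝ} (h0 : 0 ≤ a) (h1 : a ≤ 1) :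
    Tendsto (fun s : ℝ => Gamma (s + a) / (Gamma s * s ^ a)) atTop (𝓝 1) := by
  have hlow : Tendsto (fun s : ℝ => (s / (s + a)) ^ (1 - a)) atTop (𝓝 1) := by
    simpa using (aux_div_add a).rpow_const (Or.inr (by linarith : (0:ℝ) ≤ 1 - a))
  refine tendsto_of_tendsto_of_tendsto_of_le_of_le' hlow tendsto_const_nhds ?_ ?_
  · -- lower bound
    filter_upwards [eventually_gt_atTop 1] with s hs
    have hs0 : (0:ℝ) < s := by linarith
    have hsa : (0:ℝ) < s + a := by linarith
    have hG : 0 < Gamma s := Gamma_pos_of_pos hs0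
    have hGa : 0 < Gamma (s + a) := Gamma_pos_of_pos hsa
    have key : s * Gamma s ≤ Gamma (s + a) * (s + a) ^ (1 - a) := by
      have h := gamma_interp hsa (by linarith : (0:ℝ) < s + a + 1) h0 h1
      rw [show a * (s + a) + (1 - a) * (s + a + 1) = s + 1 by ring] at h
      rw [Real.Gamma_add_one hs0.ne'] at h
      rw [show s + a + 1 = (s + a) + 1 from rfl, Real.Gamma_add_one hsa.ne'] at h
      calc s * Gamma s ≤ Gamma (s + a) ^ a * ((s + a) * Gamma (s + a)) ^ (1 - a) := h
        _ = Gamma (s + a) * (s + a) ^ (1 - a) := by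
            rw [Real.mul_rpow hsa.le hGa.le, ← mul_assoc, mul_comm _ ((s+a)^(1-a)), mul_assoc,
              ← Real.rpow_add hGa, show a + (1 - a) = 1 by ring, Real.rpow_one, mul_comm]
    rw [Real.div_rpow hs0.le hsa.le, div_le_div_iff₀ (by positivity) (by positivity)]
    calc s ^ (1 - a) * (Gamma s * s ^ a) = (s * Gamma s) * s ^ (1 - a) * s ^ a / s := by
          field_simp
      _ = s * Gamma s := by
          rw [mul_assoc, ← Real.rpow_add hs0, show 1 - a + a = 1 by ring, Real.rpow_one]
          field_simp
      _ ≤ Gamma (s + a) * (s + a) ^ (1 - a) := key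
  · -- upper bound
    filter_upwards [eventually_gt_atTop 1] with s hs
    have hs0 : (0:ℝ) < s := by linarith
    have hG : 0 < Gamma s := Gamma_pos_of_pos hs0
    have key : Gamma (s + a) ≤ Gamma s * s ^ a := by
      have h := gamma_interp (by linarith : (0:ℝ) < s + 1) hs0 h0 h1
      rw [show a * (s + 1) + (1 - a) * s = s + a by ring, Real.Gamma_add_one hs0.ne'] at h
      calc Gamma (s + a) ≤ (s * Gamma s) ^ a * Gamma s ^ (1 - a) := h
        _ = Gamma s * s ^ a := by
            rw [Real.mul_rpow hs0.le hG.le, mul_assoc, ← Real.rpow_add hG,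
              show a + (1 - a) = 1 by ring, Real.rpow_one, mul_comm]
    rw [div_le_one (by positivity)]
    exact key

lemma wendel_step {b : ℝ} (hb : 0 ≤ b)
    (ih : Tendsto (fun s : ℝ => Gamma (s + b) / (Gamma s * s ^ b)) atTop (𝓝 1)) :
    Tendsto (fun s : ℝ => Gamma (s + (b + 1)) / (Gamma s * s ^ (b + 1))) atTop (𝓝 1) := by
  have h := (ih.mul (aux_add_div b))
  rw [mul_one] at h
  refine h.congr' ?_
  filter_upwards [eventually_gt_atTop 1] with s hs
  have hs0 : (0:ℝ) < s := by linarith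
  have hsb : (0:ℝ) < s + b := by linarith
  have hG : 0 < Gamma s := Gamma_pos_of_pos hs0
  have hGb : 0 < Gamma (s + b) := Gamma_pos_of_pos hsb
  rw [show s + (b + 1) = (s + b) + 1 by ring, Real.Gamma_add_one hsb.ne',
    Real.rpow_add_one hs0.ne']
  field_simp

lemma wendel {a : ℝ} (ha : 0 ≤ a) :
    Tendsto (fun s : ℝ => Gamma (s + a) / (Gamma s * s ^ a)) atTop (𝓝 1) := by
  obtain ⟨n, hn⟩ := exists_nat_ge a
  induction n generalizing a with
  | zero => exact wendel01 ha (by push_cast at hn; linarith)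
  | succ n ih =>
    by_cases h : a ≤ n
    · exact ih ha h
    · push_neg at h
      by_cases h1 : a ≤ 1
      · exact wendel01 ha h1
      · push_neg at h1
        have := wendel_step (by linarith : (0:ℝ) ≤ a - 1)
          (ih (by linarith) (by push_cast; push_cast at hn; linarith))
        simpa using this

lemma ratio_half :
    Tendsto (fun s : ℝ => Gamma s * s ^ (1/2 : ℝ) / Gamma (s + 1/2)) atTop (𝓝 1) := by
  have h := (wendel (by norm_num : (0:ℝ) ≤ 1/2)).inv₀ one_ne_zero
  rw [inv_one] at h
  refine h.congr ?_
  intro s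
  rw [← one_div, one_div_div]

lemma gamma_sym {a : ℝ} (ha : 0 ≤ a) :
    Tendsto (fun s : ℝ => Gamma (s + a) * Gamma (s - a) / Gamma s ^ 2) atTop (𝓝 1) := by
  have hU := wendel ha
  have hshift : Tendsto (fun s : ℝ => s - a) atTop atTop :=
    tendsto_atTop_add_const_right _ (-a) tendsto_id
  have hV : Tendsto (fun s : ℝ => Gamma s / (Gamma (s - a) * (s - a) ^ a)) atTop (𝓝 1) := by
    have := hU.comp hshift
    refine this.congr ?_
    intro s
    simp [Function.comp, sub_add_cancel]
  have hW : Tendsto (fun s : ℝ => (s / (s - a)) ^ a) atTop (𝓝 1) := by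
    have h1 : Tendsto (fun s : ℝ => s / (s - a)) atTop (𝓝 1) := by
      simpa [← sub_eq_add_neg] using aux_div_add (-a)
    simpa using h1.rpow_const (Or.inr ha)
  have h := (hU.mul hW).div hV one_ne_zero
  rw [mul_one, div_one] at h
  refine h.congr' ?_
  filter_upwards [eventually_gt_atTop (a + 1)] with s hs
  have hs0 : (0:ℝ) < s := by linarith
  have hsa : (0:ℝ) < s + a := by linarith
  have hsma : (0:ℝ) < s - a := by linarith
  have hG := Gamma_pos_of_pos hs0
  have hGa := Gamma_pos_of_pos hsa
  have hGma := Gamma_pos_of_pos hsma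
  have hra : (0:ℝ) < s ^ a := by positivity
  have hrma : (0:ℝ) < (s - a) ^ a := by positivity
  simp only [Pi.div_apply]
  rw [Real.div_rpow hs0.le hsma.le]
  field_simp

lemma main_eq {p : ℝ} (hp : 2 ≤ p) {N : ℕ} (hN : 1 ≤ N) :
    eulerBeta (p / 2 * ((N : ℝ) - (N / 2 : ℕ)) + 1) (p / 2 * ((N / 2 : ℕ) : ℝ) + 1) /
      (Real.sqrt (Real.pi / p) * 2 ^ (-(p * N) / 2) * (N : ℝ) ^ (-(1 : ℝ) / 2)) =
    (Gamma ((p * N / 4 + 1) + p / 4 * ((N % 2 : ℕ) : ℝ)) *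
        Gamma ((p * N / 4 + 1) - p / 4 * ((N % 2 : ℕ) : ℝ)) / Gamma (p * N / 4 + 1) ^ 2) *
      (Gamma (p * N / 4 + 1) * (p * N / 4 + 1) ^ (1/2 : ℝ) / Gamma ((p * N / 4 + 1) + 1/2)) *
      (p * N / (4 * (p * N / 4 + 1))) ^ (1/2 : ℝ) := by
  have hp0 : (0:ℝ) < p := by linarith
  set n : ℝ := (N : ℝ) with hn
  set k : ℝ := ((N / 2 : ℕ) : ℝ) with hk
  set m : ℝ := ((N % 2 : ℕ) : ℝ) with hm
  have hnkm : n = 2 * k + m := by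
    rw [hn, hk, hm]
    push_cast
    have := Nat.div_add_mod N 2
    exact_mod_cast (by omega : N = 2 * (N / 2) + N % 2)
  have hn1 : (1:ℝ) ≤ n := by rw [hn]; exact_mod_cast hN
  have hm01 : 0 ≤ m ∧ m ≤ 1 := by
    constructor <;> rw [hm]
    · positivity
    · exact_mod_cast Nat.le_of_lt_succ (Nat.mod_lt N (by norm_num))
  set s : ℝ := p * n / 4 + 1 with hs
  set d : ℝ := p / 4 * m with hd
  have hs0 : 0 < s := by rw [hs]; positivity
  have hd0 : 0 ≤ d := by rw [hd]; nlinarith [hm01.1]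
  have hdlt : d < s := by rw [hd, hs]; nlinarith [hm01.1, hm01.2]
  have hx : p / 2 * (n - k) + 1 = s + d := by rw [hs, hd, hnkm]; ring
  have hy : p / 2 * k + 1 = s - d := by
    rw [hs, hd, show k = (n - m)/2 by rw [hnkm]; ring]; ring
  have hxy : (p / 2 * (n - k) + 1) + (p / 2 * k + 1) = 2 * s := by rw [hx, hy]; ring
  rw [eulerBeta, hx, hy, show s + d + (s - d) = 2 * s by ring]
  -- duplication
  have h2pos : (0:ℝ) < (2:ℝ) ^ (1 - 2 * s) := Real.rpow_pos_of_pos two_pos _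
  have hΓ2 : Gamma (2 * s) = Gamma s * Gamma (s + 1/2) / ((2:ℝ) ^ (1 - 2 * s) * √π) := by
    rw [eq_div_iff (by positivity), Real.Gamma_mul_Gamma_add_half s]; ring
  have hpow : (2:ℝ) ^ (-(p * n) / 2) = 2 * (2:ℝ) ^ (1 - 2 * s) := by
    rw [show -(p * n) / 2 = 1 + (1 - 2 * s) by rw [hs]; ring, Real.rpow_add two_pos,
      Real.rpow_one]
  have hsqrtpi : √π = π ^ (1/2 : ℝ) := Real.sqrt_eq_rpow π
  have hsqrtpp : √(π / p) = π ^ (1/2 : ℝ) / p ^ (1/2 : ℝ) := by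
    rw [Real.sqrt_eq_rpow, Real.div_rpow Real.pi_pos.le hp0.le]
  have hnhalf : n ^ (-(1:ℝ) / 2) = (n ^ (1/2 : ℝ))⁻¹ := by
    rw [show -(1:ℝ)/2 = -(1/2 : ℝ) by norm_num, Real.rpow_neg (by positivity)]
  have hW : (p * n / (4 * s)) ^ (1/2 : ℝ) =
      p ^ (1/2:ℝ) * n ^ (1/2:ℝ) / (2 * s ^ (1/2:ℝ)) := by
    rw [Real.div_rpow (by positivity) (by positivity), Real.mul_rpow hp0.le (by positivity),
      Real.mul_rpow (by norm_num) hs0.le,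
      show ((4:ℝ)) ^ ((1:ℝ)/2) = 2 by
        rw [show (4:ℝ) = 2^(2:ℕ) by norm_num, ← Real.rpow_natCast 2 2,
          ← Real.rpow_mul (by norm_num)]
        norm_num]
  have hGs := Real.Gamma_pos_of_pos hs0
  have hGsd := Real.Gamma_pos_of_pos (by linarith : (0:ℝ) < s + d)
  have hGsmd := Real.Gamma_pos_of_pos (by linarith : (0:ℝ) < s - d)
  have hGsh := Real.Gamma_pos_of_pos (by rw [hs]; nlinarith : (0:ℝ) < s + 1/2)
  have hppos : (0:ℝ) < p ^ (1/2:ℝ) := Real.rpow_pos_of_pos hp0 _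
  have hpipos : (0:ℝ) < π ^ (1/2:ℝ) := Real.rpow_pos_of_pos Real.pi_pos _
  have hnpos : (0:ℝ) < n ^ (1/2:ℝ) := Real.rpow_pos_of_pos (by linarith) _
  have hspos : (0:ℝ) < s ^ (1/2:ℝ) := Real.rpow_pos_of_pos hs0 _
  rw [hΓ2, hpow, hsqrtpp, hnhalf, hW, hsqrtpi]
  field_simp

lemma hs_top (hp0 : 0 < p) :
    Tendsto (fun N : ℕ => p * (N:ℝ) / 4 + 1) atTop atTop := by
  refine tendsto_atTop_add_const_right _ 1 ?_
  exact (Tendsto.const_mul_atTop hp0 tendsto_natCast_atTop_atTop).atTop_div_const (by norm_num)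


theorem stmt_18 (p : ℝ) (hp : 2 ≤ p) :
    Filter.Tendsto (fun N : ℕ =>
        eulerBeta (p / 2 * ((N : ℝ) - (N / 2 : ℕ)) + 1) (p / 2 * ((N / 2 : ℕ) : ℝ) + 1) /
          (Real.sqrt (Real.pi / p) * 2 ^ (-(p * N) / 2) * (N : ℝ) ^ (-(1 : ℝ) / 2)))
      Filter.atTop (nhds 1) := by
  have hp0 : (0:ℝ) < p := by linarith
  have hstop := hs_top hp0
  -- A
  have hf1 : Tendsto (fun N : ℕ => Gamma ((p * N / 4 + 1) + p/4) * Gamma ((p * N / 4 + 1) - p/4)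
      / Gamma (p * N / 4 + 1) ^ 2) atTop (𝓝 1) :=
    (gamma_sym (by positivity : (0:ℝ) ≤ p/4)).comp hstop
  have hA : Tendsto (fun N : ℕ => Gamma ((p * N / 4 + 1) + p / 4 * ((N % 2 : ℕ) : ℝ)) *
      Gamma ((p * N / 4 + 1) - p / 4 * ((N % 2 : ℕ) : ℝ)) / Gamma (p * N / 4 + 1) ^ 2)
      atTop (𝓝 1) := by
    have hmm : ∀ N : ℕ, Gamma ((p * N / 4 + 1) + p / 4 * ((N % 2 : ℕ) : ℝ)) *
        Gamma ((p * N / 4 + 1) - p / 4 * ((N % 2 : ℕ) : ℝ)) / Gamma (p * N / 4 + 1) ^ 2 = 1 ∨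
        Gamma ((p * N / 4 + 1) + p / 4 * ((N % 2 : ℕ) : ℝ)) *
        Gamma ((p * N / 4 + 1) - p / 4 * ((N % 2 : ℕ) : ℝ)) / Gamma (p * N / 4 + 1) ^ 2 =
        Gamma ((p * N / 4 + 1) + p/4) * Gamma ((p * N / 4 + 1) - p/4)
          / Gamma (p * N / 4 + 1) ^ 2 := by
      intro N
      rcases Nat.mod_two_eq_zero_or_one N with h | h
      · left
        have hG : 0 < Gamma (p * N / 4 + 1) := Gamma_pos_of_pos (by positivity)
        rw [h]
        push_cast
        rw [mul_zero, add_zero, sub_zero, sq, div_self (by positivity)]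
      · right
        rw [h]
        norm_num
    have hmin : Tendsto (fun N : ℕ => min 1 (Gamma ((p * N / 4 + 1) + p/4) *
        Gamma ((p * N / 4 + 1) - p/4) / Gamma (p * N / 4 + 1) ^ 2)) atTop (𝓝 1) := by
      have := (tendsto_const_nhds : Tendsto (fun _ : ℕ => (1:ℝ)) atTop (𝓝 1)).min hf1
      rwa [min_self] at this
    have hmax : Tendsto (fun N : ℕ => max 1 (Gamma ((p * N / 4 + 1) + p/4) *
        Gamma ((p * N / 4 + 1) - p/4) / Gamma (p * N / 4 + 1) ^ 2)) atTop (𝓝 1) := by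
      have := (tendsto_const_nhds : Tendsto (fun _ : ℕ => (1:ℝ)) atTop (𝓝 1)).max hf1
      rwa [max_self] at this
    refine tendsto_of_tendsto_of_tendsto_of_le_of_le hmin hmax ?_ ?_ <;> intro N <;>
      dsimp only <;> rcases hmm N with h | h <;> rw [h]
    · exact min_le_left _ _
    · exact min_le_right _ _
    · exact le_max_left _ _
    · exact le_max_right _ _
  -- C
  have hC : Tendsto (fun N : ℕ => Gamma (p * N / 4 + 1) * (p * N / 4 + 1) ^ (1/2 : ℝ) /
      Gamma ((p * N / 4 + 1) + 1/2)) atTop (𝓝 1) := ratio_half.comp hstop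
  -- W
  have hW : Tendsto (fun N : ℕ => (p * N / (4 * (p * N / 4 + 1))) ^ (1/2 : ℝ)) atTop (𝓝 1) := by
    have hpn : Tendsto (fun N : ℕ => p * (N:ℝ)) atTop atTop :=
      Tendsto.const_mul_atTop hp0 tendsto_natCast_atTop_atTop
    have h1 : Tendsto (fun N : ℕ => p * (N:ℝ) / (p * N + 4)) atTop (𝓝 1) :=
      (aux_div_add 4).comp hpn
    have h2 : Tendsto (fun N : ℕ => p * (N:ℝ) / (4 * (p * N / 4 + 1))) atTop (𝓝 1) := by
      refine h1.congr fun N => ?_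
      ring_nf
    simpa using h2.rpow_const (Or.inr (by norm_num : (0:ℝ) ≤ 1/2))
  have h := (hA.mul hC).mul hW
  rw [mul_one, mul_one] at h
  refine h.congr' ?_
  filter_upwards [eventually_ge_atTop 1] with N hN
  exact (main_eq hp hN).symm
end
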